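/- arXiv:2005.03219 — 6 statements merged into one kernel-verified Lean document; each statement's English description precedes it below -/
import Mathlib

section
/- Let X and X̂ be random variables on a probability space with values in ℝ^d, each admitting a bounded density with respect to Lebesgue measure. Let E be a Borel set such that the indicator 1_E has bounded variation in ℝ^d. Then for all p, q ∈ (0,∞), E[|1_E(X) − 1_E(X̂)|^q] ≤ ((2K₀)^p + A₁(‖p_X‖_∞ + ‖p_X̂‖_∞) |D1_E|(ℝ^d)) · (E[|X − X̂|^p])^{1/(p+1)}, where K₀ is the constant in the pointwise maximal-function estimate for BV functions and A₁ is the constant in the Hardy–Littlewood weak (1,1) maximal inequality. -/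
/-!
Since `1_E` only takes the values `0` and `1`, the left-hand side is the probability that `E`
separates `X` and `X̂`. On `{|X - X̂| > δ}` Markov's inequality bounds it by `E|X - X̂|^p / δ^p`.
On `{|X - X̂| ≤ δ}`, the pointwise BV estimate forces `M(D1_E) > 1/(2K₀δ)` at one of the two
points, and by the weak (1,1) inequality that event has probability at most
`A₁ (‖p_X‖_∞ + ‖p_X̂‖_∞) |D1_E|(ℝ^d) 2K₀δ`; the choice `2K₀δ = (E|X - X̂|^p)^(1/(p+1))` balances
the two terms. The pointwise estimate only holds for almost every pair of points, whereas the
law of `(X, X̂)` may be singular, so it is applied along the chain `X, X + εU, X̂` with `U`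
uniform on the unit ball and independent of `(X, X̂)`, and then `ε → 0`.
-/

open MeasureTheory Metric Filter Set
open scoped ENNReal Topology

noncomputable section

abbrev Euc (d : ℕ) := EuclideanSpace ℝ (Fin d)

/-- Hardy--Littlewood maximal function of a measure. -/
def maximal {d : ℕ} (ν : Measure (Euc d)) (x : Euc d) : ℝ≥0∞ :=
  ⨆ (s : ℝ) (_ : 0 < s), ν (closedBall x s) / volume (closedBall x s)

/-- Restricted Hardy--Littlewood maximal function of a measure. -/
def maximalR {d : ℕ} (R : ℝ) (ν : Measure (Euc d)) (x : Euc d) : ℝ≥0∞ :=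
  ⨆ (s : ℝ) (_ : s ∈ Set.Ioc 0 R), ν (closedBall x s) / volume (closedBall x s)

open ProbabilityTheory

theorem lowerSemicontinuous_maximal {d : ℕ} (ν : Measure (Euc d)) :
    LowerSemicontinuous (maximal ν) := by
  intro x c hc
  obtain ⟨s, hs, hcs⟩ : ∃ s > 0, c < ν (closedBall x s) / volume (closedBall x s) := by
    simpa only [maximal, lt_iSup_iff, exists_prop] using hc
  set n := Module.finrank ℝ (Euc d)
  set B := volume (closedBall (0 : Euc d) 1)
  have hvol : ∀ y (r : ℝ), 0 ≤ r → volume (closedBall y r) = ENNReal.ofReal (r ^ n) * B :=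
    fun y _ hr => Measure.addHaar_closedBall' volume y hr
  have hlim : Tendsto (fun h : ℝ => ν (closedBall x s) / (ENNReal.ofReal ((s + h) ^ n) * B))
      (𝓝 0) (𝓝 (ν (closedBall x s) / volume (closedBall x s))) := by
    rw [hvol x s hs.le]
    refine ENNReal.Tendsto.const_div (ENNReal.Tendsto.mul_const ?_
      (Or.inr measure_closedBall_lt_top.ne))
      (Or.inl (ENNReal.mul_ne_top ENNReal.ofReal_ne_top measure_closedBall_lt_top.ne))
    have : Continuous fun h : ℝ => ENNReal.ofReal ((s + h) ^ n) :=
      ENNReal.continuous_ofReal.comp (by fun_prop)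
    simpa using this.tendsto 0
  -- a slightly larger ball around any `y` close to `x` contains `closedBall x s`
  obtain ⟨h, hch, hh : 0 < h⟩ :=
    (((hlim.mono_left nhdsWithin_le_nhds).eventually (eventually_gt_nhds hcs)).and
      (self_mem_nhdsWithin : Ioi (0 : ℝ) ∈ 𝓝[>] 0)).exists
  filter_upwards [ball_mem_nhds x hh] with y hy
  calc c < ν (closedBall x s) / (ENNReal.ofReal ((s + h) ^ n) * B) := hch
    _ ≤ ν (closedBall y (s + h)) / volume (closedBall y (s + h)) := by
      rw [hvol y _ (by linarith)]
      gcongr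
      exact closedBall_subset_closedBall' (by rw [dist_comm]; linarith [mem_ball.1 hy])
    _ ≤ maximal ν y := le_iSup₂_of_le (s + h) (by linarith) le_rfl

theorem ENNReal.inv_two_mul_lt_or_lt_of_one_le_mul_add {ρ c a b : ℝ≥0∞} (hρc : ρ < c)
    (h : 1 ≤ ρ * (a + b)) : (2 * c)⁻¹ < a ∨ (2 * c)⁻¹ < b := by
  by_contra! hab
  have hc : c ≠ 0 := (hρc.trans_le' bot_le).ne'
  have : ρ * (a + b) < 1 :=
    calc ρ * (a + b) ≤ ρ * ((2 * c)⁻¹ + (2 * c)⁻¹) := by gcongr <;> [exact hab.1; exact hab.2]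
    _ = ρ / c := by
      rw [ENNReal.mul_inv (by simp) (by simp), ← add_mul, ENNReal.inv_two_add_inv_two, one_mul,
        div_eq_mul_inv]
    _ < 1 := by
      rcases eq_or_ne c ⊤ with rfl | hct
      · simp
      · exact (ENNReal.div_lt_iff (Or.inl hc) (Or.inl hct)).2 (by simpa using hρc)
  exact this.not_ge h

theorem ENNReal.le_of_forall_pos_le_add_mul_ofReal {a b C : ℝ≥0∞} (hC : C ≠ ⊤) (K : ℝ)
    (h : ∀ e : ℝ, 0 < e → a ≤ b + C * ENNReal.ofReal (K * e)) : a ≤ b := by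
  have hlim : Tendsto (fun e : ℝ => b + C * ENNReal.ofReal (K * e)) (𝓝[>] 0) (𝓝 b) := by
    have : Tendsto (fun e : ℝ => ENNReal.ofReal (K * e)) (𝓝[>] 0) (𝓝 0) :=
      ((ENNReal.continuous_ofReal.comp (continuous_const.mul continuous_id)).tendsto' 0 0
        (by simp)).mono_left nhdsWithin_le_nhds
    simpa using tendsto_const_nhds.add (ENNReal.Tendsto.const_mul this (Or.inr hC))
  exact ge_of_tendsto hlim (eventually_nhdsWithin_of_forall h)

theorem ENNReal.le_mul_rpow_of_forall_le_div_rpow_add {a I C : ℝ≥0∞} {K p : ℝ} (hK : 0 < K)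
    (hp : 0 < p) (hC : C ≠ ⊤)
    (h : ∀ r : ℝ, 0 < r → a ≤ I / ENNReal.ofReal r ^ p + C * ENNReal.ofReal (K * r)) :
    a ≤ (ENNReal.ofReal (K ^ p) + C) * I ^ (1 / (p + 1)) := by
  rcases eq_or_ne I 0 with rfl | hI
  · have : a ≤ 0 := ENNReal.le_of_forall_pos_le_add_mul_ofReal hC K fun r hr => by
      simpa [ENNReal.zero_div] using h r hr
    exact this.trans bot_le
  rcases eq_or_ne I ⊤ with rfl | hI_top
  · rw [ENNReal.top_rpow_of_pos (by positivity), ENNReal.mul_top]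
    · exact le_top
    · exact (ENNReal.ofReal_pos.2 (Real.rpow_pos_of_pos hK p)).ne' ∘ fun h => by
        simpa using (add_eq_zero.1 h).1
  -- `r` is chosen so that the two terms of the bound balance: `K r = I ^ (1 / (p + 1))`
  have hT_top : I ^ (1 / (p + 1)) ≠ ⊤ := ENNReal.rpow_ne_top_of_nonneg (by positivity) hI_top
  set t := (I ^ (1 / (p + 1))).toReal
  have ht : 0 < t := ENNReal.toReal_pos (ENNReal.rpow_pos (pos_iff_ne_zero.2 hI) hI_top).ne' hT_top
  have hIt : I = ENNReal.ofReal (t ^ (p + 1)) := by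
    rw [← ENNReal.ofReal_rpow_of_pos ht, ENNReal.ofReal_toReal hT_top,
      ← ENNReal.rpow_mul, one_div_mul_cancel (by linarith), ENNReal.rpow_one]
  have hreal : t ^ (p + 1) / (t / K) ^ p = K ^ p * t := by
    rw [Real.div_rpow ht.le hK.le, Real.rpow_add_one ht.ne']
    field_simp
  calc a ≤ I / ENNReal.ofReal (t / K) ^ p + C * ENNReal.ofReal (K * (t / K)) :=
        h _ (by positivity)
    _ = (ENNReal.ofReal (K ^ p) + C) * ENNReal.ofReal t := by
      rw [hIt, ENNReal.ofReal_rpow_of_pos (by positivity),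
        ← ENNReal.ofReal_div_of_pos (by positivity), hreal, mul_div_cancel₀ _ hK.ne',
        ENNReal.ofReal_mul (by positivity), add_mul]
    _ = (ENNReal.ofReal (K ^ p) + C) * I ^ (1 / (p + 1)) := by
      rw [ENNReal.ofReal_toReal hT_top]

theorem ofReal_abs_indicator_sub_indicator_of_iff {α : Type*} {E : Set α} {x y : α}
    (h : x ∈ E ↔ y ∈ E) :
    ENNReal.ofReal |E.indicator (fun _ => (1 : ℝ)) x - E.indicator (fun _ => (1 : ℝ)) y| = 0 := by
  by_cases hx : x ∈ E <;> simp_all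

theorem ofReal_abs_indicator_sub_indicator_of_not_iff {α : Type*} {E : Set α} {x y : α}
    (h : ¬(x ∈ E ↔ y ∈ E)) :
    ENNReal.ofReal |E.indicator (fun _ => (1 : ℝ)) x - E.indicator (fun _ => (1 : ℝ)) y| = 1 := by
  by_cases hx : x ∈ E <;> simp_all

theorem lintegral_ofReal_abs_indicator_sub_rpow {Ω α : Type*} [MeasurableSpace Ω]
    [MeasurableSpace α] (P : Measure Ω) {X Xh : Ω → α} (hX : Measurable X) (hXh : Measurable Xh)
    {E : Set α} (hE : MeasurableSet E) {q : ℝ} (hq : 0 < q) :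
    ∫⁻ ω, ENNReal.ofReal
        |E.indicator (fun _ => (1 : ℝ)) (X ω) - E.indicator (fun _ => (1 : ℝ)) (Xh ω)| ^ q ∂P
      = P {ω | ¬(X ω ∈ E ↔ Xh ω ∈ E)} := by
  have hB : MeasurableSet {ω | ¬(X ω ∈ E ↔ Xh ω ∈ E)} := by measurability
  rw [← lintegral_indicator_one hB]
  refine lintegral_congr fun ω => ?_
  by_cases h : X ω ∈ E ↔ Xh ω ∈ E
  · simp [ofReal_abs_indicator_sub_indicator_of_iff h, ENNReal.zero_rpow_of_pos hq, h]
  · simp [ofReal_abs_indicator_sub_indicator_of_not_iff h, h]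

section Hajlasz

variable {α : Type*} [PseudoMetricSpace α]

def HajlaszIneq (K : ℝ) (f : α → ℝ) (g : α → ℝ≥0∞) (x y : α) : Prop :=
  ENNReal.ofReal |f x - f y| ≤ ENNReal.ofReal (K * dist x y) * (g x + g y)

variable {K : ℝ} {f : α → ℝ} {g : α → ℝ≥0∞}

theorem HajlaszIneq.symm {x y : α} (h : HajlaszIneq K f g x y) : HajlaszIneq K f g y x := by
  rwa [HajlaszIneq, abs_sub_comm, dist_comm, add_comm]

theorem measurableSet_hajlaszIneq [MeasurableSpace α] [OpensMeasurableSpace α]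
    [SecondCountableTopology α] (hf : Measurable f) (hg : Measurable g) :
    MeasurableSet {w : α × α | HajlaszIneq K f g w.1 w.2} :=
  measurableSet_le ((hf.comp measurable_fst).sub (hf.comp measurable_snd)).abs.ennreal_ofReal
    ((measurable_const.mul (measurable_fst.dist measurable_snd)).ennreal_ofReal.mul
      ((hg.comp measurable_fst).add (hg.comp measurable_snd)))

theorem HajlaszIneq.inv_two_mul_lt_or_lt {E : Set α} {x y : α} {c : ℝ≥0∞}
    (h : HajlaszIneq K (E.indicator fun _ => 1) g x y) (hxy : ¬(x ∈ E ↔ y ∈ E))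
    (hc : ENNReal.ofReal (K * dist x y) < c) : (2 * c)⁻¹ < g x ∨ (2 * c)⁻¹ < g y := by
  refine ENNReal.inv_two_mul_lt_or_lt_of_one_le_mul_add hc ?_
  rwa [HajlaszIneq, ofReal_abs_indicator_sub_indicator_of_not_iff hxy] at h

theorem HajlaszIneq.chain {E : Set α} {x y z : α} {c₁ c₂ : ℝ≥0∞}
    (hxy : HajlaszIneq K (E.indicator fun _ => 1) g x y)
    (hyz : HajlaszIneq K (E.indicator fun _ => 1) g y z) (hxz : ¬(x ∈ E ↔ z ∈ E))
    (h₁ : ENNReal.ofReal (K * dist x y) < c₁) (h₂ : ENNReal.ofReal (K * dist y z) < c₂)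
    (hc : c₁ ≤ c₂) : (2 * c₁)⁻¹ < g x ∨ (2 * c₂)⁻¹ < g y ∨ (2 * c₂)⁻¹ < g z := by
  by_cases hE : x ∈ E ↔ y ∈ E
  · exact Or.inr (hyz.inv_two_mul_lt_or_lt (by rwa [← hE]) h₂)
  · refine (hxy.inv_two_mul_lt_or_lt hE h₁).imp_right fun hy => Or.inl (lt_of_le_of_lt ?_ hy)
    gcongr

end Hajlasz

section Perturbation

variable {Ω : Type*} [MeasurableSpace Ω] {P : Measure Ω}
  {F : Type*} [NormedAddCommGroup F] [NormedSpace ℝ F] [MeasurableSpace F] [BorelSpace F]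
  [FiniteDimensional ℝ F] {μ : Measure F} [μ.IsAddHaarMeasure]

theorem measure_preimage_le_essSup_mul {β : Type*} [MeasurableSpace β] {μ : Measure β}
    {X : Ω → β} (hX : Measurable X) {ρ : β → ℝ≥0∞} (hρ : P.map X = μ.withDensity ρ)
    {s : Set β} (hs : MeasurableSet s) : P (X ⁻¹' s) ≤ essSup ρ μ * μ s := by
  rw [← Measure.map_apply hX hs, hρ, withDensity_apply _ hs, ← setLIntegral_const]
  exact lintegral_mono_ae (ae_restrict_of_ae ae_le_essSup)

theorem measure_prod_add_smul_mem_le [SFinite P] {ν : Measure F} [IsProbabilityMeasure ν]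
    {X : Ω → F} (hX : Measurable X) {ρ : F → ℝ≥0∞} (hρ : P.map X = μ.withDensity ρ) (e : ℝ)
    {S : Set F} (hS : MeasurableSet S) :
    P.prod ν {z | X z.1 + e • z.2 ∈ S} ≤ essSup ρ μ * μ S := by
  have hm : MeasurableSet {z : Ω × F | X z.1 + e • z.2 ∈ S} :=
    (by fun_prop : Measurable fun z : Ω × F => X z.1 + e • z.2) hS
  rw [Measure.prod_apply_symm hm]
  calc ∫⁻ u, P (X ⁻¹' ((· + e • u) ⁻¹' S)) ∂ν ≤ ∫⁻ _, essSup ρ μ * μ S ∂ν := by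
        refine lintegral_mono fun u => ?_
        rw [← measure_preimage_add_right μ (e • u) S]
        exact measure_preimage_le_essSup_mul hX hρ (hS.preimage (measurable_add_const _))
  _ = essSup ρ μ * μ S := by simp

theorem ae_prod_add_smul_of_ae_ae {R : F → F → Prop}
    (hR : MeasurableSet {w : F × F | R w.1 w.2}) (h : ∀ᵐ x ∂μ, ∀ᵐ y ∂μ, R x y)
    {W V : Ω → F} (hW : Measurable W) (hWμ : P.map W ≪ μ) (hV : Measurable V)
    {ν : Measure F} [SFinite ν] (hν : ν ≪ μ) {e : ℝ} (he : e ≠ 0) :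
    ∀ᵐ z ∂P.prod ν, R (W z.1) (V z.1 + e • z.2) := by
  have hm : MeasurableSet {z : Ω × F | R (W z.1) (V z.1 + e • z.2)} :=
    (by fun_prop : Measurable fun z : Ω × F => (W z.1, V z.1 + e • z.2)) hR
  rw [Measure.ae_prod_iff_ae_ae hm]
  filter_upwards [ae_of_ae_map hW.aemeasurable (hWμ.ae_le h)] with ω hω
  exact hν.ae_le (((measurePreserving_add_left μ (V ω)).quasiMeasurePreserving.comp
    (Measure.quasiMeasurePreserving_smul μ he)).ae hω)

end Perturbation

section Jump

variable {Ω : Type*} [MeasurableSpace Ω] {P : Measure Ω} [SFinite P]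
  {F : Type*} [NormedAddCommGroup F] [NormedSpace ℝ F] [MeasurableSpace F] [BorelSpace F]
  [FiniteDimensional ℝ F] {μ : Measure F} [μ.IsAddHaarMeasure]
  {K : ℝ} {E : Set F} {g : F → ℝ≥0∞} {W : ℝ≥0∞}
  {X Xh : Ω → F} {ρ ρh : F → ℝ≥0∞}

theorem measure_not_iff_dist_le_le_add (hK : 0 < K) (hE : MeasurableSet E) (hg : Measurable g)
    (hgE : ∀ᵐ x ∂μ, ∀ᵐ y ∂μ, HajlaszIneq K (E.indicator fun _ => 1) g x y)
    (hweak : ∀ lam : ℝ≥0∞, lam ≠ 0 → μ {x | lam < g x} ≤ W / lam)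
    (hX : Measurable X) (hXh : Measurable Xh)
    (hρ : P.map X = μ.withDensity ρ) (hρh : P.map Xh = μ.withDensity ρh)
    {ν : Measure F} [IsProbabilityMeasure ν] (hν : ν ≪ μ) (hν1 : ∀ᵐ u ∂ν, ‖u‖ ≤ 1)
    {r e : ℝ} (hr : 0 ≤ r) (he : 0 < e) :
    P {ω | ¬(X ω ∈ E ↔ Xh ω ∈ E) ∧ dist (X ω) (Xh ω) ≤ r}
      ≤ W * (essSup ρ μ + essSup ρh μ) * ENNReal.ofReal (2 * K * r)
        + W * (2 * essSup ρ μ + essSup ρh μ) * ENNReal.ofReal (4 * K * e) := by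
  -- thresholds for `K |X - Y|` and `K |Y - X̂|` along the chain `X, Y = X + e • u, X̂`
  set c₁ := ENNReal.ofReal (2 * K * e)
  set c₂ := ENNReal.ofReal (K * r + 2 * K * e)
  set U : ℝ≥0∞ → Set F := fun c => {x | (2 * c)⁻¹ < g x}
  have hU : ∀ c, MeasurableSet (U c) := fun c => measurableSet_lt measurable_const hg
  have hUμ : ∀ c, c ≠ ⊤ → μ (U c) ≤ W * (2 * c) := fun c hc => by
    simpa [div_eq_mul_inv] using hweak _ (ENNReal.inv_ne_zero.2 (ENNReal.mul_ne_top (by simp) hc))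
  have hR := measurableSet_hajlaszIneq (K := K) (f := E.indicator fun _ => 1)
    (measurable_const.indicator hE) hg
  have hac : ∀ {Y : Ω → F} {ρY : F → ℝ≥0∞}, P.map Y = μ.withDensity ρY → P.map Y ≪ μ :=
    fun h => h ▸ withDensity_absolutelyContinuous _ _
  have hXY := ae_prod_add_smul_of_ae_ae hR hgE hX (hac hρ) hX hν he.ne'
  have hYXh := ae_prod_add_smul_of_ae_ae (R := fun x y => HajlaszIneq K _ g y x)
    (measurableSet_swap_iff.mpr hR) (hgE.mono fun x hx => hx.mono fun y hy => hy.symm)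
    hXh (hac hρh) hX hν he.ne'
  have hsub : {ω | ¬(X ω ∈ E ↔ Xh ω ∈ E) ∧ dist (X ω) (Xh ω) ≤ r} ×ˢ (univ : Set F)
      ≤ᵐ[P.prod ν] ((X ⁻¹' U c₁) ×ˢ univ ∪ {z | X z.1 + e • z.2 ∈ U c₂} ∪ (Xh ⁻¹' U c₂) ×ˢ univ :
        Set (Ω × F)) := by
    filter_upwards [hXY, hYXh, Measure.quasiMeasurePreserving_snd.ae hν1]
      with z hXY hYXh hz hmem
    obtain ⟨⟨hjump, hdist⟩, -⟩ := hmem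
    have hd₁ : dist (X z.1) (X z.1 + e • z.2) ≤ e := by
      rw [dist_self_add_right, norm_smul, Real.norm_of_nonneg he.le]
      exact mul_le_of_le_one_right he.le hz
    have hd₂ : dist (X z.1 + e • z.2) (Xh z.1) ≤ e + r :=
      (dist_triangle_left _ _ (X z.1)).trans (add_le_add hd₁ hdist)
    rcases hXY.chain (c₁ := c₁) (c₂ := c₂) hYXh hjump
      ((ENNReal.ofReal_lt_ofReal_iff (by positivity)).2 (by nlinarith))
      ((ENNReal.ofReal_lt_ofReal_iff (by positivity)).2 (by nlinarith))
      (ENNReal.ofReal_le_ofReal (by nlinarith)) with h | h | h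
    · exact Or.inl (Or.inl ⟨h, trivial⟩)
    · exact Or.inl (Or.inr h)
    · exact Or.inr ⟨h, trivial⟩
  calc P {ω | ¬(X ω ∈ E ↔ Xh ω ∈ E) ∧ dist (X ω) (Xh ω) ≤ r}
      = P.prod ν ({ω | ¬(X ω ∈ E ↔ Xh ω ∈ E) ∧ dist (X ω) (Xh ω) ≤ r} ×ˢ univ) := by
        rw [Measure.prod_prod, measure_univ, mul_one]
    _ ≤ P.prod ν ((X ⁻¹' U c₁) ×ˢ univ) + P.prod ν {z | X z.1 + e • z.2 ∈ U c₂}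
          + P.prod ν ((Xh ⁻¹' U c₂) ×ˢ univ) :=
        (measure_mono_ae hsub).trans
          ((measure_union_le _ _).trans (add_le_add (measure_union_le _ _) le_rfl))
    _ ≤ essSup ρ μ * (W * (2 * c₁)) + essSup ρ μ * (W * (2 * c₂))
          + essSup ρh μ * (W * (2 * c₂)) := by
        simp only [Measure.prod_prod, measure_univ, mul_one]
        gcongr
        · exact (measure_preimage_le_essSup_mul hX hρ (hU _)).trans
            (by gcongr; exact hUμ _ ENNReal.ofReal_ne_top)
        · exact (measure_prod_add_smul_mem_le hX hρ e (hU _)).trans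
            (by gcongr; exact hUμ _ ENNReal.ofReal_ne_top)
        · exact (measure_preimage_le_essSup_mul hXh hρh (hU _)).trans
            (by gcongr; exact hUμ _ ENNReal.ofReal_ne_top)
    _ = _ := by
        have h₁ : 2 * c₁ = ENNReal.ofReal (4 * K * e) := by
          rw [← ENNReal.ofReal_ofNat 2, ← ENNReal.ofReal_mul zero_le_two]; ring_nf
        have h₂ : 2 * c₂ = ENNReal.ofReal (2 * K * r) + ENNReal.ofReal (4 * K * e) := by
          rw [← ENNReal.ofReal_ofNat 2, ← ENNReal.ofReal_mul zero_le_two,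
            ← ENNReal.ofReal_add (by positivity) (by positivity)]
          ring_nf
        rw [h₁, h₂]
        ring

theorem measure_not_iff_dist_le_le (hK : 0 < K) (hE : MeasurableSet E) (hg : Measurable g)
    (hgE : ∀ᵐ x ∂μ, ∀ᵐ y ∂μ, HajlaszIneq K (E.indicator fun _ => 1) g x y)
    (hweak : ∀ lam : ℝ≥0∞, lam ≠ 0 → μ {x | lam < g x} ≤ W / lam) (hW : W ≠ ⊤)
    (hX : Measurable X) (hXh : Measurable Xh)
    (hρ : P.map X = μ.withDensity ρ) (hρh : P.map Xh = μ.withDensity ρh)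
    (hρ_top : essSup ρ μ ≠ ⊤) (hρh_top : essSup ρh μ ≠ ⊤) {r : ℝ} (hr : 0 ≤ r) :
    P {ω | ¬(X ω ∈ E ↔ Xh ω ∈ E) ∧ dist (X ω) (Xh ω) ≤ r}
      ≤ W * (essSup ρ μ + essSup ρh μ) * ENNReal.ofReal (2 * K * r) := by
  have : IsProbabilityMeasure (μ[|closedBall 0 1]) :=
    cond_isProbabilityMeasure_of_finite
      (measure_closedBall_pos μ 0 one_pos).ne' measure_closedBall_lt_top.ne
  have hball : ∀ᵐ u ∂μ[|closedBall 0 1], ‖u‖ ≤ 1 :=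
    (ae_cond_mem measurableSet_closedBall).mono fun u hu => by simpa using hu
  refine ENNReal.le_of_forall_pos_le_add_mul_ofReal
    (C := W * (2 * essSup ρ μ + essSup ρh μ)) (by finiteness) (4 * K) fun e he => ?_
  exact measure_not_iff_dist_le_le_add hK hE hg hgE hweak hX hXh hρ hρh
    cond_absolutelyContinuous hball hr he

theorem measure_not_iff_le (hK : 0 < K) (hE : MeasurableSet E) (hg : Measurable g)
    (hgE : ∀ᵐ x ∂μ, ∀ᵐ y ∂μ, HajlaszIneq K (E.indicator fun _ => 1) g x y)
    (hweak : ∀ lam : ℝ≥0∞, lam ≠ 0 → μ {x | lam < g x} ≤ W / lam) (hW : W ≠ ⊤)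
    (hX : Measurable X) (hXh : Measurable Xh)
    (hρ : P.map X = μ.withDensity ρ) (hρh : P.map Xh = μ.withDensity ρh)
    (hρ_top : essSup ρ μ ≠ ⊤) (hρh_top : essSup ρh μ ≠ ⊤) {p r : ℝ} (hp : 0 < p) (hr : 0 < r) :
    P {ω | ¬(X ω ∈ E ↔ Xh ω ∈ E)}
      ≤ (∫⁻ ω, edist (X ω) (Xh ω) ^ p ∂P) / ENNReal.ofReal r ^ p
        + W * (essSup ρ μ + essSup ρh μ) * ENNReal.ofReal (2 * K * r) := by
  calc P {ω | ¬(X ω ∈ E ↔ Xh ω ∈ E)}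
      ≤ P {ω | ENNReal.ofReal r ^ p ≤ edist (X ω) (Xh ω) ^ p}
        + P {ω | ¬(X ω ∈ E ↔ Xh ω ∈ E) ∧ dist (X ω) (Xh ω) ≤ r} := by
        refine (measure_mono fun ω hω => ?_).trans (measure_union_le _ _)
        by_cases hd : dist (X ω) (Xh ω) ≤ r
        · exact Or.inr ⟨hω, hd⟩
        · refine Or.inl (ENNReal.rpow_le_rpow ?_ hp.le)
          rw [edist_dist]
          exact ENNReal.ofReal_le_ofReal (not_le.1 hd).le
    _ ≤ _ := by
        gcongr
        · exact meas_ge_le_lintegral_div ((hX.edist hXh).pow_const p).aemeasurable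
            (ENNReal.rpow_pos (ENNReal.ofReal_pos.2 hr) ENNReal.ofReal_ne_top).ne'
            (ENNReal.rpow_ne_top_of_nonneg hp.le ENNReal.ofReal_ne_top)
        · exact measure_not_iff_dist_le_le hK hE hg hgE hweak hW hX hXh hρ hρh hρ_top hρh_top
            hr.le

end Jump

/-- `DE` stands for the total variation measure `|D 1_E|`. -/
theorem stmt_0_general {d : ℕ} {Ω : Type*} [MeasurableSpace Ω] (P : Measure Ω) [IsProbabilityMeasure P]
    (X Xh : Ω → Euc d) (hX : Measurable X) (hXh : Measurable Xh)
    (pX pXh : Euc d → ℝ≥0∞)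
    (hdX : P.map X = volume.withDensity pX)
    (hdXh : P.map Xh = volume.withDensity pXh)
    (hbX : essSup pX volume ≠ ∞) (hbXh : essSup pXh volume ≠ ∞)
    (E : Set (Euc d)) (hE : MeasurableSet E)
    (DE : Measure (Euc d)) [IsFiniteMeasure DE]
    (K₀ A₁ : ℝ) (hK₀ : 0 < K₀)
    (hpt : ∀ᵐ x ∂(volume : Measure (Euc d)), ∀ᵐ y ∂(volume : Measure (Euc d)),
      ENNReal.ofReal |E.indicator (fun _ => (1:ℝ)) x - E.indicator (fun _ => (1:ℝ)) y|
        ≤ ENNReal.ofReal (K₀ * dist x y) * (maximal DE x + maximal DE y))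
    (hweak : ∀ lam : ℝ≥0∞, lam ≠ 0 →
      volume {x : Euc d | lam < maximal DE x} ≤ ENNReal.ofReal A₁ * DE Set.univ / lam)
    (p q : ℝ) (hp : 0 < p) (hq : 0 < q) :
    ∫⁻ ω, (ENNReal.ofReal
        |E.indicator (fun _ => (1:ℝ)) (X ω) - E.indicator (fun _ => (1:ℝ)) (Xh ω)|) ^ q ∂P
      ≤ (ENNReal.ofReal ((2 * K₀) ^ p)
          + ENNReal.ofReal A₁ * (essSup pX volume + essSup pXh volume) * DE Set.univ)
        * (∫⁻ ω, edist (X ω) (Xh ω) ^ p ∂P) ^ (1 / (p + 1)) := by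
  rw [lintegral_ofReal_abs_indicator_sub_rpow P hX hXh hE hq]
  refine ENNReal.le_mul_rpow_of_forall_le_div_rpow_add (by positivity : (0 : ℝ) < 2 * K₀) hp
    (by finiteness) fun r hr => ?_
  refine (measure_not_iff_le hK₀ hE (lowerSemicontinuous_maximal DE).measurable hpt hweak
    (by finiteness) hX hXh hdX hdXh hbX hbXh hp hr).trans_eq ?_
  ring

/-- Multi-dimensional Avikainen estimate for indicator functions of sets of finite perimeter
(Lemma 2.15 / "Lem_key_1"). `DE` is the total variation measure `|D 1_E|`, `K₀` the constant
of the pointwise maximal-function estimate for BV functions, `A₁` the constant of the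
Hardy–Littlewood weak (1,1) inequality. -/
theorem stmt_0 {d : ℕ} {Ω : Type*} [MeasurableSpace Ω] (P : Measure Ω) [IsProbabilityMeasure P]
    (X Xh : Ω → Euc d) (hX : Measurable X) (hXh : Measurable Xh)
    (pX pXh : Euc d → ℝ≥0∞)
    (hdX : P.map X = volume.withDensity pX)
    (hdXh : P.map Xh = volume.withDensity pXh)
    (hbX : essSup pX volume ≠ ∞) (hbXh : essSup pXh volume ≠ ∞)
    (E : Set (Euc d)) (hE : MeasurableSet E)
    (DE : Measure (Euc d)) [IsFiniteMeasure DE]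
    (K₀ A₁ : ℝ) (hK₀ : 0 < K₀) (hA₁ : 0 < A₁)
    (hpt : ∀ᵐ x ∂(volume : Measure (Euc d)), ∀ᵐ y ∂(volume : Measure (Euc d)),
      ENNReal.ofReal |E.indicator (fun _ => (1:ℝ)) x - E.indicator (fun _ => (1:ℝ)) y|
        ≤ ENNReal.ofReal (K₀ * dist x y) * (maximal DE x + maximal DE y))
    (hweak : ∀ lam : ℝ≥0∞, lam ≠ 0 →
      volume {x : Euc d | lam < maximal DE x} ≤ ENNReal.ofReal A₁ * DE Set.univ / lam)
    (p q : ℝ) (hp : 0 < p) (hq : 0 < q) :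
    ∫⁻ ω, (ENNReal.ofReal
        |E.indicator (fun _ => (1:ℝ)) (X ω) - E.indicator (fun _ => (1:ℝ)) (Xh ω)|) ^ q ∂P
      ≤ (ENNReal.ofReal ((2 * K₀) ^ p)
          + ENNReal.ofReal A₁ * (essSup pX volume + essSup pXh volume) * DE Set.univ)
        * (∫⁻ ω, edist (X ω) (Xh ω) ^ p ∂P) ^ (1 / (p + 1)) :=
  stmt_0_general P X Xh hX hXh pX pXh hdX hdXh hbX hbXh E hE DE K₀ A₁ hK₀ hpt hweak p q hp hq
end
end

section
/- Let s ∈ (0,1), p ∈ [1,∞), and f ∈ W^{s,p}(ℝ^d). Then there exist a constant K₀(s,p) > 0 and a Lebesgue-null set N ⊂ ℝ^d such that for all x, y ∈ ℝ^d \ N, |f(x) − f(y)| ≤ K₀(s,p) |x − y|^s (M_{2|x−y|}(G_{s,p}f)(x) + M_{2|x−y|}(G_{s,p}f)(y)), where G_{s,p}f(x) = (∫_{ℝ^d} |f(x)−f(y)|^p / |x−y|^{d+sp} dy)^{1/p}. -/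
/-!
Average the triangle inequality `|f x - f y| ≤ |f x - f w| + |f w - f y|` over `w` in the ball
`B = B(x, r)`, `r = |x - y|`. Every `w ∈ B` lies within `2r` of both `x` and `y`, so Hölder's
inequality bounds each average by `(2r)^((d + sp)/p) |B|^(-1/p) G_{s,p} f` at `x`, resp. `y`, and
`|B| ∝ r^d` turns the factor into `C r^s`. This pointwise estimate holds for all `x, y`; the maximal
functions enter only through `G_{s,p} f (z) ≤ M_R(G_{s,p} f)(z)` at Lebesgue points `z` of the
locally integrable function `G_{s,p} f`.
-/

open MeasureTheory Metric Filter Set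
open scoped ENNReal Topology

noncomputable section

/-- The Gagliardo operator `G_{s,p} f (x) = (∫ |f x − f y|^p / |x−y|^{d+sp} dy)^{1/p}`. -/
def Gsp (d : ℕ) (s p : ℝ) (f : Euc d → ℝ) (x : Euc d) : ℝ≥0∞ :=
  (∫⁻ y, ENNReal.ofReal (|f x - f y| ^ p / dist x y ^ ((d : ℝ) + s * p)) ∂volume) ^ (1 / p)

section RpowBound

variable {α : Type*} [MeasurableSpace α] {μ : Measure α}

theorem lintegral_le_lintegral_rpow_mul_measure_univ {g : α → ℝ≥0∞} (hg : AEMeasurable g μ)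
    {p : ℝ} (hp : 1 ≤ p) :
    ∫⁻ a, g a ∂μ ≤ (∫⁻ a, g a ^ p ∂μ) ^ (1 / p) * μ univ ^ (1 - 1 / p) := by
  simpa [eLpNorm'_eq_lintegral_enorm] using
    eLpNorm'_le_eLpNorm'_mul_rpow_measure_univ one_pos hp hg.aestronglyMeasurable

theorem isLocallyFiniteMeasure_withDensity_of_lintegral_rpow_ne_top [TopologicalSpace α]
    [OpensMeasurableSpace α] [IsLocallyFiniteMeasure μ] {g : α → ℝ≥0∞} (hg : AEMeasurable g μ)
    {p : ℝ} (hp : 1 ≤ p) (hgp : ∫⁻ a, g a ^ p ∂μ ≠ ∞) :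
    IsLocallyFiniteMeasure (μ.withDensity g) := by
  refine ⟨fun x ↦ ?_⟩
  obtain ⟨U, ⟨hxU, hUo⟩, hμU⟩ := (μ.finiteAt_nhds x).exists_mem_basis (nhds_basis_opens x)
  refine ⟨U, hUo.mem_nhds hxU, ?_⟩
  rw [withDensity_apply _ hUo.measurableSet]
  refine (lintegral_le_lintegral_rpow_mul_measure_univ hg.restrict hp).trans_lt ?_
  have hexp : 0 ≤ 1 - 1 / p := sub_nonneg.2 <| (div_le_one (by linarith)).2 hp
  refine ENNReal.mul_lt_top (ENNReal.rpow_lt_top_of_nonneg (by positivity) ?_)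
    (ENNReal.rpow_lt_top_of_nonneg hexp ?_)
  · exact ((setLIntegral_le_lintegral _ _).trans_lt hgp.lt_top).ne
  · simpa using hμU.ne

end RpowBound

theorem le_rpow_div_rpow_rpow_mul_rpow {a ρ R c p : ℝ} (ha : 0 ≤ a) (hp : 0 < p) (hc : 0 ≤ c)
    (hρ : 0 < ρ) (hρR : ρ ≤ R) : a ≤ (a ^ p / ρ ^ c) ^ (1 / p) * R ^ (c / p) := by
  have hroot : (a ^ p / ρ ^ c) ^ (1 / p) = a / ρ ^ (c / p) := by
    rw [Real.div_rpow (by positivity) (by positivity), ← Real.rpow_mul ha, ← Real.rpow_mul hρ.le,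
      mul_one_div_cancel hp.ne', Real.rpow_one, mul_one_div]
  rw [hroot, div_mul_eq_mul_div, le_div_iff₀ (by positivity)]
  exact mul_le_mul_of_nonneg_left (Real.rpow_le_rpow hρ.le hρR (by positivity)) ha

def gagliardoKernel (d : ℕ) (s p : ℝ) (f : Euc d → ℝ) (x y : Euc d) : ℝ≥0∞ :=
  ENNReal.ofReal (|f x - f y| ^ p / dist x y ^ ((d : ℝ) + s * p))

section Gagliardo

variable {d : ℕ} {s p : ℝ} {f : Euc d → ℝ}

theorem Gsp_eq_lintegral_gagliardoKernel (x : Euc d) :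
    Gsp d s p f x = (∫⁻ y, gagliardoKernel d s p f x y) ^ (1 / p) := rfl

theorem measurable_Gsp (hf : Measurable f) : Measurable (Gsp d s p f) := by
  refine Measurable.pow_const (Measurable.lintegral_prod_right (ν := volume)
    (f := gagliardoKernel d s p f) ?_) _
  exact Measurable.ennreal_ofReal <|
    (((hf.comp measurable_fst).sub (hf.comp measurable_snd)).norm.pow_const p).div
      (measurable_dist.pow_const _)

theorem Gsp_ae_eq_of_ae_eq {g : Euc d → ℝ} (hfg : f =ᵐ[volume] g) :
    Gsp d s p f =ᵐ[volume] Gsp d s p g := by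
  filter_upwards [hfg] with x hx
  simp only [Gsp_eq_lintegral_gagliardoKernel, gagliardoKernel]
  congr 1
  refine lintegral_congr_ae ?_
  filter_upwards [hfg] with y hy
  rw [hx, hy]

theorem aemeasurable_Gsp (hf : AEMeasurable f volume) : AEMeasurable (Gsp d s p f) volume :=
  (measurable_Gsp hf.measurable_mk).aemeasurable.congr (Gsp_ae_eq_of_ae_eq hf.ae_eq_mk).symm

theorem ofReal_abs_sub_le_gagliardoKernel_rpow_mul (hp : 0 < p) (hs : 0 ≤ s) {z w : Euc d} {R : ℝ}
    (hzw : dist z w ≤ R) :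
    ENNReal.ofReal |f z - f w| ≤ gagliardoKernel d s p f z w ^ (1 / p) * ENNReal.ofReal
      (R ^ (((d : ℝ) + s * p) / p)) := by
  rcases eq_or_ne z w with rfl | hzw'
  · simp
  have hR : 0 ≤ R := dist_nonneg.trans hzw
  rw [gagliardoKernel, ENNReal.ofReal_rpow_of_nonneg (by positivity) (by positivity),
    ← ENNReal.ofReal_mul (by positivity)]
  exact ENNReal.ofReal_le_ofReal <|
    le_rpow_div_rpow_rpow_mul_rpow (abs_nonneg _) hp (by positivity) (dist_pos.2 hzw') hzw

theorem setLIntegral_abs_sub_le_Gsp (hp : 1 ≤ p) (hs : 0 ≤ s) (hf : AEMeasurable f volume)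
    {z : Euc d} {B : Set (Euc d)} {R : ℝ} (hB : ∀ w ∈ B, dist z w ≤ R) (hBm : MeasurableSet B) :
    ∫⁻ w in B, ENNReal.ofReal |f z - f w| ≤
      ENNReal.ofReal (R ^ (((d : ℝ) + s * p) / p)) * volume B ^ (1 - 1 / p) * Gsp d s p f z := by
  have hp0 : 0 < p := by linarith
  have hk : AEMeasurable (gagliardoKernel d s p f z) (volume.restrict B) :=
    ((((aemeasurable_const.sub hf.restrict).norm).pow_const p).div
      ((measurable_const.dist measurable_id).pow_const _).aemeasurable).ennreal_ofReal
  calc ∫⁻ w in B, ENNReal.ofReal |f z - f w|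
      ≤ ∫⁻ w in B, gagliardoKernel d s p f z w ^ (1 / p) *
          ENNReal.ofReal (R ^ (((d : ℝ) + s * p) / p)) :=
        setLIntegral_mono' hBm fun w hw ↦
          ofReal_abs_sub_le_gagliardoKernel_rpow_mul hp0 hs (hB w hw)
    _ = ENNReal.ofReal (R ^ (((d : ℝ) + s * p) / p)) *
          ∫⁻ w in B, gagliardoKernel d s p f z w ^ (1 / p) := by
        rw [lintegral_mul_const'' _ (hk.pow_const _), mul_comm]
    _ ≤ ENNReal.ofReal (R ^ (((d : ℝ) + s * p) / p)) *
          ((∫⁻ w in B, gagliardoKernel d s p f z w) ^ (1 / p) * volume B ^ (1 - 1 / p)) := by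
        have hHolder := lintegral_le_lintegral_rpow_mul_measure_univ (hk.pow_const (1 / p)) hp
        simp_rw [← ENNReal.rpow_mul, one_div_mul_cancel hp0.ne', ENNReal.rpow_one,
          Measure.restrict_apply_univ] at hHolder
        gcongr
    _ ≤ ENNReal.ofReal (R ^ (((d : ℝ) + s * p) / p)) * volume B ^ (1 - 1 / p) * Gsp d s p f z := by
        rw [mul_comm (_ ^ (1 / p)), ← mul_assoc, Gsp_eq_lintegral_gagliardoKernel]
        gcongr
        exact Measure.restrict_le_self

theorem ofReal_abs_sub_mul_volume_closedBall_le (hp : 1 ≤ p) (hs : 0 ≤ s)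
    (hf : AEMeasurable f volume) {x y : Euc d} {r : ℝ} (hxy : dist x y ≤ r) :
    ENNReal.ofReal |f x - f y| * volume (closedBall x r) ≤
      ENNReal.ofReal ((2 * r) ^ (((d : ℝ) + s * p) / p)) * volume (closedBall x r) ^ (1 - 1 / p)
        * (Gsp d s p f x + Gsp d s p f y) := by
  have hr : 0 ≤ r := dist_nonneg.trans hxy
  have hx : ∀ w ∈ closedBall x r, dist x w ≤ 2 * r := fun w hw ↦
    (mem_closedBall'.1 hw).trans (by linarith)
  have hy : ∀ w ∈ closedBall x r, dist y w ≤ 2 * r := fun w hw ↦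
    (dist_triangle_left y w x).trans (by linarith [mem_closedBall'.1 hw])
  calc ENNReal.ofReal |f x - f y| * volume (closedBall x r)
      = ∫⁻ _ in closedBall x r, ENNReal.ofReal |f x - f y| := (setLIntegral_const _ _).symm
    _ ≤ ∫⁻ w in closedBall x r, (ENNReal.ofReal |f x - f w| + ENNReal.ofReal |f y - f w|) := by
        refine lintegral_mono fun w ↦ ?_
        rw [abs_sub_comm (f y) (f w)]
        exact (ENNReal.ofReal_le_ofReal (abs_sub_le _ _ _)).trans ENNReal.ofReal_add_le
    _ = (∫⁻ w in closedBall x r, ENNReal.ofReal |f x - f w|)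
          + ∫⁻ w in closedBall x r, ENNReal.ofReal |f y - f w| :=
        lintegral_add_left' ((aemeasurable_const.sub hf.restrict).norm).ennreal_ofReal _
    _ ≤ _ := by
        rw [mul_add]
        exact add_le_add (setLIntegral_abs_sub_le_Gsp hp hs hf hx measurableSet_closedBall)
          (setLIntegral_abs_sub_le_Gsp hp hs hf hy measurableSet_closedBall)

theorem volume_closedBall_rpow_neg (x : Euc d) {r : ℝ} (hr : 0 < r) (q : ℝ) :
    volume (closedBall x r) ^ (-q) =
      ENNReal.ofReal (r ^ (-((d : ℝ) * q)) * (volume (ball (0 : Euc d) 1)).toReal ^ (-q)) := by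
  have hκ0 : volume (ball (0 : Euc d) 1) ≠ 0 := (measure_ball_pos volume 0 one_pos).ne'
  have hκ : volume (ball (0 : Euc d) 1) ≠ ∞ := measure_ball_lt_top.ne
  rw [Measure.addHaar_closedBall volume x hr.le, finrank_euclideanSpace_fin,
    ENNReal.mul_rpow_of_ne_zero (ENNReal.ofReal_pos.2 (pow_pos hr d)).ne' hκ0,
    ENNReal.ofReal_rpow_of_pos (pow_pos hr d), ← Real.rpow_natCast, ← Real.rpow_mul hr.le,
    ← ENNReal.ofReal_toReal hκ, ENNReal.ofReal_rpow_of_pos (ENNReal.toReal_pos hκ0 hκ),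
    ← ENNReal.ofReal_mul (by positivity), mul_neg, ENNReal.toReal_ofReal ENNReal.toReal_nonneg]

theorem ofReal_rpow_mul_volume_closedBall_rpow_div (hp : 0 < p) (x : Euc d) {r : ℝ} (hr : 0 < r) :
    ENNReal.ofReal ((2 * r) ^ (((d : ℝ) + s * p) / p)) * volume (closedBall x r) ^ (1 - 1 / p)
        / volume (closedBall x r) =
      ENNReal.ofReal ((2 : ℝ) ^ (((d : ℝ) + s * p) / p) *
        (volume (ball (0 : Euc d) 1)).toReal ^ (-(1 / p)) * r ^ s) := by
  have hV0 : volume (closedBall x r) ≠ 0 := (measure_closedBall_pos volume x hr).ne'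
  have hV : volume (closedBall x r) ≠ ∞ := measure_closedBall_lt_top.ne
  have hdiv : volume (closedBall x r) ^ (1 - 1 / p) / volume (closedBall x r) =
      volume (closedBall x r) ^ (-(1 / p)) := by
    rw [div_eq_mul_inv, ← ENNReal.rpow_neg_one, ← ENNReal.rpow_add _ _ hV0 hV]
    ring_nf
  have hexp : r ^ (((d : ℝ) + s * p) / p) * r ^ (-((d : ℝ) * (1 / p))) = r ^ s := by
    rw [← Real.rpow_add hr]
    congr 1
    field_simp
    ring
  rw [mul_div_assoc, hdiv, volume_closedBall_rpow_neg x hr, ← ENNReal.ofReal_mul (by positivity),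
    Real.mul_rpow zero_le_two hr.le]
  congr 1
  linear_combination (2 : ℝ) ^ (((d : ℝ) + s * p) / p) *
    (volume (ball (0 : Euc d) 1)).toReal ^ (-(1 / p)) * hexp

theorem exists_ofReal_abs_sub_le_Gsp (hp : 1 ≤ p) (hs : 0 ≤ s) (hf : AEMeasurable f volume) :
    ∃ C : ℝ, 0 < C ∧ ∀ x y : Euc d, ENNReal.ofReal |f x - f y| ≤
      ENNReal.ofReal (C * dist x y ^ s) * (Gsp d s p f x + Gsp d s p f y) := by
  have hp0 : 0 < p := by linarith
  have hκ : 0 < (volume (ball (0 : Euc d) 1)).toReal :=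
    ENNReal.toReal_pos (measure_ball_pos volume 0 one_pos).ne' measure_ball_lt_top.ne
  refine ⟨(2 : ℝ) ^ (((d : ℝ) + s * p) / p) * (volume (ball (0 : Euc d) 1)).toReal ^ (-(1 / p)),
    by positivity, fun x y ↦ ?_⟩
  rcases eq_or_ne x y with rfl | hxy
  · simp
  have hr : 0 < dist x y := dist_pos.2 hxy
  have hV0 : volume (closedBall x (dist x y)) ≠ 0 := (measure_closedBall_pos volume x hr).ne'
  have hV : volume (closedBall x (dist x y)) ≠ ∞ := measure_closedBall_lt_top.ne
  rw [← ofReal_rpow_mul_volume_closedBall_rpow_div hp0 x hr, div_eq_mul_inv, mul_right_comm,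
    ← div_eq_mul_inv, ENNReal.le_div_iff_mul_le (.inl hV0) (.inl hV)]
  exact ofReal_abs_sub_mul_volume_closedBall_le hp hs hf le_rfl |>.trans_eq (by ring)

end Gagliardo

theorem le_maximalR_of_tendsto {d : ℕ} {ν : Measure (Euc d)} {x : Euc d} {c : ℝ≥0∞} {R : ℝ}
    (hR : 0 < R)
    (hc : Tendsto (fun t ↦ ν (closedBall x t) / volume (closedBall x t)) (𝓝[>] 0) (𝓝 c)) :
    c ≤ maximalR R ν x := by
  refine le_of_tendsto hc ?_
  filter_upwards [Ioc_mem_nhdsGT hR] with t ht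
  exact le_iSup₂ (f := fun t (_ : t ∈ Ioc 0 R) ↦ ν (closedBall x t) / volume (closedBall x t)) t ht

theorem ae_le_maximalR_withDensity {d : ℕ} {g : Euc d → ℝ≥0∞} (hg : AEMeasurable g volume)
    [IsLocallyFiniteMeasure (volume.withDensity g)] :
    ∀ᵐ x, ∀ R : ℝ, 0 < R → g x ≤ maximalR R (volume.withDensity g) x := by
  filter_upwards [Besicovitch.ae_tendsto_rnDeriv (volume.withDensity g) volume,
    Measure.rnDeriv_withDensity₀ volume hg] with x hx hgx R hR
  exact le_maximalR_of_tendsto hR (hgx ▸ hx)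

theorem stmt_3_general {d : ℕ} (s p : ℝ) (hs0 : 0 < s) (hp : 1 ≤ p)
    (f : Euc d → ℝ) (hfLp : MemLp f (ENNReal.ofReal p) volume)
    (hfW : ∫⁻ x, Gsp d s p f x ^ p ∂volume ≠ ∞) :
    ∃ K₀ : ℝ, 0 < K₀ ∧ ∃ N : Set (Euc d), volume N = 0 ∧
      ∀ x ∉ N, ∀ y ∉ N,
        ENNReal.ofReal |f x - f y|
          ≤ ENNReal.ofReal (K₀ * dist x y ^ s)
            * (maximalR (2 * dist x y) (volume.withDensity (Gsp d s p f)) x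
              + maximalR (2 * dist x y) (volume.withDensity (Gsp d s p f)) y) := by
  have hf : AEMeasurable f volume := hfLp.aestronglyMeasurable.aemeasurable
  have hG : AEMeasurable (Gsp d s p f) volume := aemeasurable_Gsp hf
  have := isLocallyFiniteMeasure_withDensity_of_lintegral_rpow_ne_top hG hp hfW
  obtain ⟨C, hC, hCf⟩ := exists_ofReal_abs_sub_le_Gsp hp hs0.le hf
  refine ⟨C, hC, _, ae_iff.1 (ae_le_maximalR_withDensity hG), fun x hx y hy ↦ ?_⟩
  rcases eq_or_ne x y with rfl | hxy
  · simp
  have hR : 0 < 2 * dist x y := mul_pos two_pos (dist_pos.2 hxy)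
  simp only [mem_ofPred_eq, not_not] at hx hy
  exact (hCf x y).trans (by gcongr; exacts [hx _ hR, hy _ hR])

/-- Pointwise maximal-function estimate for fractional Sobolev functions (Lemma 2.24):
for `f ∈ W^{s,p}(ℝ^d)` there are `K₀(s,p) > 0` and a Lebesgue-null set `N` with
`|f x − f y| ≤ K₀(s,p) |x−y|^s (M_{2|x−y|}(G_{s,p}f)(x) + M_{2|x−y|}(G_{s,p}f)(y))`
for all `x, y ∉ N`. -/
theorem stmt_3 {d : ℕ} (s p : ℝ) (hs0 : 0 < s) (hs1 : s < 1) (hp : 1 ≤ p)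
    (f : Euc d → ℝ) (hfLp : MemLp f (ENNReal.ofReal p) volume)
    (hfW : ∫⁻ x, Gsp d s p f x ^ p ∂volume ≠ ∞) :
    ∃ K₀ : ℝ, 0 < K₀ ∧ ∃ N : Set (Euc d), volume N = 0 ∧
      ∀ x ∉ N, ∀ y ∉ N,
        ENNReal.ofReal |f x - f y|
          ≤ ENNReal.ofReal (K₀ * dist x y ^ s)
            * (maximalR (2 * dist x y) (volume.withDensity (Gsp d s p f)) x
              + maximalR (2 * dist x y) (volume.withDensity (Gsp d s p f)) y) :=
  stmt_3_general s p hs0 hp f hfLp hfW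
end
end

section
/- Let s ∈ (0,1), p ∈ [1,∞), f ∈ W^{s,p}(ℝ^d), x ∈ ℝ^d and r > 0. Then the mean oscillation of f on the ball B(x,r) satisfies ⨍_{B(x,r)} |f(z) − (f)_{x,r}| dz ≤ C₀(s,p) r^s M_r(G_{s,p} f)(x), where (f)_{x,r} = ⨍_{B(x,r)} f, C₀(s,p) = 2^{(d+sp)/p} (Γ(d/2+1)/π^{d/2})^{1/p}, and G_{s,p}f(x) = (∫ |f(x)−f(y)|^p/|x−y|^{d+sp} dy)^{1/p}. -/
open MeasureTheory Metric Filter Set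
open scoped ENNReal Topology

noncomputable section

/-! For z ∈ B = B(x,r), writing the mean of f as an average gives
|f z − (f)_{x,r}| ≤ ⨍_B |f z − f y| dy ≤ (⨍_B |f z − f y|^p dy)^{1/p} by Jensen. As |z − y| ≤ 2r
on B, |f z − f y|^p ≤ (2r)^{d+sp} |f z − f y|^p / |z − y|^{d+sp}, so the last average is at most
((2r)^{d+sp} / |B|)^{1/p} G_{s,p}f(z) = C₀ r^s G_{s,p}f(z). Averaging over z ∈ B leaves
C₀ r^s ν(B)/|B| with ν = G_{s,p}f dx, one of the quotients whose supremum is M_r ν(x). -/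

open Real

theorem setLAverage_le_setLAverage_rpow_rpow {α : Type*} [MeasurableSpace α] {μ : Measure α}
    {s : Set α} {g : α → ℝ≥0∞} {p : ℝ} (hp : 1 ≤ p) (hg : AEMeasurable g (μ.restrict s))
    (hs₀ : μ s ≠ 0) (hs : μ s ≠ ∞) :
    ⨍⁻ y in s, g y ∂μ ≤ (⨍⁻ y in s, g y ^ p ∂μ) ^ (1 / p) := by
  have hHolder := eLpNorm'_le_eLpNorm'_mul_rpow_measure_univ (μ := μ.restrict s) one_pos hp
    hg.aestronglyMeasurable
  simp only [eLpNorm', enorm_eq_self, ENNReal.rpow_one, div_one, Measure.restrict_apply_univ]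
    at hHolder
  rw [setLAverage_eq, setLAverage_eq, ENNReal.div_rpow_of_nonneg _ _ (by positivity),
    ENNReal.div_le_iff hs₀ hs]
  calc ∫⁻ y in s, g y ∂μ ≤ (∫⁻ y in s, g y ^ p ∂μ) ^ (1 / p) * μ s ^ (1 - 1 / p) := hHolder
    _ = (∫⁻ y in s, g y ^ p ∂μ) ^ (1 / p) / μ s ^ (1 / p) * μ s := by
      rw [ENNReal.rpow_sub _ _ hs₀ hs, ENNReal.rpow_one]
      simp only [div_eq_mul_inv]
      ring

theorem ofReal_setAverage_abs_sub_setAverage_le {α : Type*} [MeasurableSpace α] {μ : Measure α}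
    {s : Set α} {f : α → ℝ} (hf : IntegrableOn f s μ) (hs₀ : μ s ≠ 0) (hs : μ s ≠ ∞) :
    ENNReal.ofReal (⨍ z in s, |f z - ⨍ w in s, f w ∂μ| ∂μ)
      ≤ ⨍⁻ z in s, ⨍⁻ y in s, ENNReal.ofReal |f z - f y| ∂μ ∂μ := by
  have hpoint (z : α) :
      ENNReal.ofReal |f z - ⨍ w in s, f w ∂μ| ≤ ⨍⁻ y in s, ENNReal.ofReal |f z - f y| ∂μ := by
    have hint : IntegrableOn (fun y => f z - f y) s μ := (integrableOn_const hs).sub hf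
    have hsub : ⨍ y in s, (f z - f y) ∂μ = f z - ⨍ w in s, f w ∂μ := by
      rw [setAverage_eq, integral_sub (integrableOn_const (C := f z) hs) hf, smul_sub,
        ← setAverage_eq, ← setAverage_eq, setAverage_const hs₀ hs]
    calc ENNReal.ofReal |f z - ⨍ w in s, f w ∂μ|
        ≤ ENNReal.ofReal (⨍ y in s, |f z - f y| ∂μ) := by
          refine ENNReal.ofReal_le_ofReal ?_
          rw [← hsub, setAverage_eq, setAverage_eq, smul_eq_mul, smul_eq_mul, abs_mul,
            abs_of_nonneg (by positivity)]
          gcongr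
          exact abs_integral_le_integral_abs
      _ = ⨍⁻ y in s, ENNReal.ofReal |f z - f y| ∂μ := by
          rw [ofReal_setAverage hint.abs (ae_of_all _ fun _ => abs_nonneg _), setLAverage_eq]
  have hosc : IntegrableOn (fun z => |f z - ⨍ w in s, f w ∂μ|) s μ :=
    (hf.sub (integrableOn_const hs)).abs
  rw [ofReal_setAverage hosc (ae_of_all _ fun _ => abs_nonneg _), ← setLAverage_eq]
  exact laverage_mono_ae (ae_of_all _ hpoint)

theorem setLIntegral_closedBall_abs_sub_rpow_le {α : Type*} [MetricSpace α] [MeasurableSpace α]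
    [OpensMeasurableSpace α] (μ : Measure α) (f : α → ℝ) {p e r : ℝ} (hp : 0 < p) (he : 0 ≤ e)
    {x z : α} (hz : z ∈ closedBall x r) :
    ∫⁻ y in closedBall x r, ENNReal.ofReal |f z - f y| ^ p ∂μ
      ≤ ENNReal.ofReal ((2 * r) ^ e)
        * ∫⁻ y, ENNReal.ofReal (|f z - f y| ^ p / dist z y ^ e) ∂μ := by
  calc ∫⁻ y in closedBall x r, ENNReal.ofReal |f z - f y| ^ p ∂μ
      ≤ ∫⁻ y in closedBall x r, ENNReal.ofReal ((2 * r) ^ e)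
          * ENNReal.ofReal (|f z - f y| ^ p / dist z y ^ e) ∂μ := by
        refine setLIntegral_mono' measurableSet_closedBall fun y hy => ?_
        have hzy : dist z y ≤ 2 * r := by
          linarith [dist_triangle_right z y x, mem_closedBall.1 hz, mem_closedBall.1 hy]
        rw [ENNReal.ofReal_rpow_of_nonneg (abs_nonneg _) hp.le,
          ← ENNReal.ofReal_mul (rpow_nonneg (dist_nonneg.trans hzy) _)]
        refine ENNReal.ofReal_le_ofReal ?_
        rcases (dist_nonneg (x := z) (y := y)).eq_or_lt with hzy₀ | hzy₀
        · rw [dist_eq_zero.1 hzy₀.symm, sub_self, abs_zero, zero_rpow hp.ne', zero_div, mul_zero]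
        · calc |f z - f y| ^ p = dist z y ^ e * (|f z - f y| ^ p / dist z y ^ e) :=
                (mul_div_cancel₀ _ (by positivity)).symm
            _ ≤ (2 * r) ^ e * (|f z - f y| ^ p / dist z y ^ e) := by gcongr
    _ ≤ ENNReal.ofReal ((2 * r) ^ e)
          * ∫⁻ y, ENNReal.ofReal (|f z - f y| ^ p / dist z y ^ e) ∂μ := by
        rw [lintegral_const_mul' _ _ ENNReal.ofReal_ne_top]
        gcongr
        exact Measure.restrict_le_self

theorem setLAverage_closedBall_abs_sub_le {α : Type*} [MetricSpace α] [MeasurableSpace α]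
    [OpensMeasurableSpace α] {μ : Measure α} {f : α → ℝ} {p e r : ℝ} (hp : 1 ≤ p) (he : 0 ≤ e)
    {x z : α} (hf : AEMeasurable f (μ.restrict (closedBall x r))) (hz : z ∈ closedBall x r)
    (h₀ : μ (closedBall x r) ≠ 0) (hfin : μ (closedBall x r) ≠ ∞) :
    ⨍⁻ y in closedBall x r, ENNReal.ofReal |f z - f y| ∂μ
      ≤ (ENNReal.ofReal ((2 * r) ^ e) / μ (closedBall x r)) ^ (1 / p)
        * (∫⁻ y, ENNReal.ofReal (|f z - f y| ^ p / dist z y ^ e) ∂μ) ^ (1 / p) := by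
  calc ⨍⁻ y in closedBall x r, ENNReal.ofReal |f z - f y| ∂μ
      ≤ (⨍⁻ y in closedBall x r, ENNReal.ofReal |f z - f y| ^ p ∂μ) ^ (1 / p) :=
        setLAverage_le_setLAverage_rpow_rpow hp
          (aemeasurable_const.sub hf).abs.ennreal_ofReal h₀ hfin
    _ ≤ (ENNReal.ofReal ((2 * r) ^ e)
          * (∫⁻ y, ENNReal.ofReal (|f z - f y| ^ p / dist z y ^ e) ∂μ)
          / μ (closedBall x r)) ^ (1 / p) := by
        rw [setLAverage_eq]
        gcongr
        exact setLIntegral_closedBall_abs_sub_rpow_le μ f (by linarith) he hz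
    _ = _ := by
        rw [ENNReal.mul_div_right_comm, ENNReal.mul_rpow_of_nonneg _ _ (by positivity)]

-- Unlike `EuclideanSpace.volume_closedBall`, this also covers dimension 0.
theorem EuclideanSpace.volume_closedBall_fin {d : ℕ} (x : EuclideanSpace ℝ (Fin d)) {r : ℝ}
    (hr : 0 ≤ r) :
    volume (closedBall x r)
      = ENNReal.ofReal (π ^ ((d : ℝ) / 2) / Gamma ((d : ℝ) / 2 + 1) * r ^ d) := by
  rcases d.eq_zero_or_pos with rfl | hd
  · rw [volume_euclideanSpace_eq_dirac, Measure.dirac_apply_of_mem]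
    · simp
    · simpa [Subsingleton.elim (0 : EuclideanSpace ℝ (Fin 0)) x] using hr
  · have : Nonempty (Fin d) := ⟨⟨0, hd⟩⟩
    rw [EuclideanSpace.volume_closedBall, Fintype.card_fin, ← ENNReal.ofReal_pow hr,
      ← ENNReal.ofReal_mul (by positivity), mul_comm, sqrt_eq_rpow, ← rpow_natCast,
      ← rpow_mul pi_pos.le]
    ring_nf

theorem ofReal_two_mul_rpow_div_volume_closedBall_rpow {d : ℕ} (x : Euc d) {r s p : ℝ}
    (hr : 0 < r) (hp : 0 < p) :
    (ENNReal.ofReal ((2 * r) ^ ((d : ℝ) + s * p)) / volume (closedBall x r)) ^ (1 / p)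
      = ENNReal.ofReal ((2 : ℝ) ^ (((d : ℝ) + s * p) / p)
          * (Gamma ((d : ℝ) / 2 + 1) / π ^ ((d : ℝ) / 2)) ^ (1 / p) * r ^ s) := by
  have hΓ : 0 < Gamma ((d : ℝ) / 2 + 1) := Gamma_pos_of_pos (by positivity)
  rw [EuclideanSpace.volume_closedBall_fin x hr.le, ← ENNReal.ofReal_div_of_pos (by positivity),
    ENNReal.ofReal_rpow_of_nonneg (by positivity) (by positivity)]
  congr 1
  have hsplit :
      (2 * r) ^ ((d : ℝ) + s * p) / (π ^ ((d : ℝ) / 2) / Gamma ((d : ℝ) / 2 + 1) * r ^ d)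
        = 2 ^ ((d : ℝ) + s * p) * (Gamma ((d : ℝ) / 2 + 1) / π ^ ((d : ℝ) / 2)) * (r ^ s) ^ p := by
    rw [mul_rpow (by norm_num) hr.le, rpow_add hr, ← rpow_natCast, ← rpow_mul hr.le]
    field_simp
  rw [hsplit, mul_rpow (by positivity) (by positivity), mul_rpow (by positivity) (by positivity),
    ← rpow_mul (by norm_num), ← rpow_mul (by positivity), mul_one_div, mul_one_div_cancel hp.ne',
    rpow_one]

theorem setLAverage_closedBall_le_maximalR {d : ℕ} (g : Euc d → ℝ≥0∞) (x : Euc d) {r : ℝ}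
    (hr : 0 < r) :
    ⨍⁻ z in closedBall x r, g z ∂volume ≤ maximalR r (volume.withDensity g) x := by
  rw [setLAverage_eq, ← withDensity_apply _ measurableSet_closedBall]
  exact le_iSup₂_of_le (f := fun s (_ : s ∈ Ioc 0 r) => _) r ⟨hr, le_rfl⟩ le_rfl

theorem stmt_4_general {d : ℕ} (s p : ℝ) (hs0 : 0 < s) (hp : 1 ≤ p)
    (f : Euc d → ℝ) (hfLp : MemLp f (ENNReal.ofReal p) volume)
    (x : Euc d) (r : ℝ) (hr : 0 < r) :
    ENNReal.ofReal
        (⨍ z in closedBall x r, |f z - ⨍ w in closedBall x r, f w ∂volume| ∂volume)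
      ≤ ENNReal.ofReal
          ((2 : ℝ) ^ (((d : ℝ) + s * p) / p)
            * (Real.Gamma ((d : ℝ) / 2 + 1) / Real.pi ^ ((d : ℝ) / 2)) ^ (1 / p)
            * r ^ s)
        * maximalR r (volume.withDensity (Gsp d s p f)) x := by
  set B := closedBall x r
  set C := (2 : ℝ) ^ (((d : ℝ) + s * p) / p)
    * (Real.Gamma ((d : ℝ) / 2 + 1) / Real.pi ^ ((d : ℝ) / 2)) ^ (1 / p) * r ^ s
  have hB₀ : volume B ≠ 0 := (measure_closedBall_pos volume x hr).ne'
  have hB : volume B ≠ ∞ := measure_closedBall_lt_top.ne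
  have hfB : IntegrableOn f B :=
    (hfLp.locallyIntegrable (ENNReal.one_le_ofReal.2 hp)).integrableOn_isCompact
      (isCompact_closedBall x r)
  have hC : (ENNReal.ofReal ((2 * r) ^ ((d : ℝ) + s * p)) / volume B) ^ (1 / p)
      = ENNReal.ofReal C :=
    ofReal_two_mul_rpow_div_volume_closedBall_rpow x hr (by linarith)
  calc ENNReal.ofReal (⨍ z in B, |f z - ⨍ w in B, f w ∂volume| ∂volume)
      ≤ ⨍⁻ z in B, ⨍⁻ y in B, ENNReal.ofReal |f z - f y| ∂volume ∂volume :=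
        ofReal_setAverage_abs_sub_setAverage_le hfB hB₀ hB
    _ ≤ ⨍⁻ z in B, ENNReal.ofReal C * Gsp d s p f z ∂volume :=
        laverage_mono_ae <| ae_restrict_of_forall_mem measurableSet_closedBall fun z hz =>
          hC ▸ setLAverage_closedBall_abs_sub_le hp (by positivity) hfB.aemeasurable hz hB₀ hB
    _ = ENNReal.ofReal C * ⨍⁻ z in B, Gsp d s p f z ∂volume := by
        rw [setLAverage_eq, setLAverage_eq, lintegral_const_mul' _ _ ENNReal.ofReal_ne_top,
          mul_div_assoc]
    _ ≤ ENNReal.ofReal C * maximalR r (volume.withDensity (Gsp d s p f)) x := by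
        gcongr
        exact setLAverage_closedBall_le_maximalR _ x hr

/-- Mean-oscillation estimate for fractional Sobolev functions (inequality (2.13)):
`⨍_{B(x,r)} |f − (f)_{x,r}| ≤ C₀(s,p) r^s M_r(G_{s,p} f)(x)` with
`C₀(s,p) = 2^{(d+sp)/p} (Γ(d/2+1)/π^{d/2})^{1/p}`. -/
theorem stmt_4 {d : ℕ} (s p : ℝ) (hs0 : 0 < s) (hs1 : s < 1) (hp : 1 ≤ p)
    (f : Euc d → ℝ) (hfLp : MemLp f (ENNReal.ofReal p) volume)
    (hfW : ∫⁻ x, Gsp d s p f x ^ p ∂volume ≠ ∞)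
    (x : Euc d) (r : ℝ) (hr : 0 < r) :
    ENNReal.ofReal
        (⨍ z in closedBall x r, |f z - ⨍ w in closedBall x r, f w ∂volume| ∂volume)
      ≤ ENNReal.ofReal
          ((2 : ℝ) ^ (((d : ℝ) + s * p) / p)
            * (Real.Gamma ((d : ℝ) / 2 + 1) / Real.pi ^ ((d : ℝ) / 2)) ^ (1 / p)
            * r ^ s)
        * maximalR r (volume.withDensity (Gsp d s p f)) x :=
  stmt_4_general s p hs0 hp f hfLp x r hr
end
end

section
/- Let Φ be an N-function whose complementary function Ψ satisfies the Δ₂-condition, and suppose X, X̂ are ℝ^d-valued random variables with bounded densities p_X, p_X̂. Then for every essentially bounded f ∈ W^{1,Φ}(ℝ^d), every q ∈ (0,∞) and every α > 0 with ∫ Φ(α|Df|) < ∞, we have E[|f(X)−f(X̂)|^q] ≤ C(q) inf_{λ>0} { λ^{−1} + (Φ^{-1}(λ))^q E[|X−X̂|^q] }, where C(q) = max{(2K₀/α)^q, (2‖f‖_∞)^q A₁(‖p_X‖_∞+‖p_X̂‖_∞)‖Φ(α|Df|)‖_{L¹(ℝ^d)}}. -/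
open MeasureTheory Metric Filter Set
open scoped ENNReal Topology

noncomputable section

open Filter in
/-- Divergence of a `C¹` vector field on `ℝ^d`. -/
def ediv {d : ℕ} (g : Euc d → Euc d) (x : Euc d) : ℝ :=
  ∑ i : Fin d,
    (inner ℝ (fderiv ℝ g x (EuclideanSpace.single i (1:ℝ))) (EuclideanSpace.single i (1:ℝ)) : ℝ)

/-- Young's complementary function `Ψ(x) = sup_{y ≥ 0} (x y − Φ(y))`. -/
def YoungCompl (Φ : ℝ → ℝ) (x : ℝ) : ℝ := sSup {z : ℝ | ∃ y ≥ (0:ℝ), z = x * y - Φ y}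

/-- The generalized inverse `Φ⁻¹(x) = inf {y ≥ 0 : Φ(y) > x}` of a Young function. -/
def PhiInv (Φ : ℝ → ℝ) (x : ℝ) : ℝ := sInf {y : ℝ | 0 ≤ y ∧ x < Φ y}

/-- `Φ⁻¹` extended to `ℝ≥0∞`. -/
def PhiInvE (Φ : ℝ → ℝ) (t : ℝ≥0∞) : ℝ≥0∞ :=
  if t = ∞ then ∞ else ENNReal.ofReal (PhiInv Φ t.toReal)

/-- The measure with density `Φ(α |Df|)` with respect to Lebesgue measure. -/
def orliczGradMeasure (d : ℕ) (Φ : ℝ → ℝ) (α : ℝ) (Df : Euc d → Euc d) : Measure (Euc d) :=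
  volume.withDensity fun z => ENNReal.ofReal (Φ (α * ‖Df z‖))

lemma phiInv_nonneg (Φ : ℝ → ℝ) (x : ℝ) : 0 ≤ PhiInv Φ x :=
  Real.sInf_nonneg fun _ hy => hy.1

lemma phiInv_mono (Φ : ℝ → ℝ) (hub : ∀ c : ℝ, ∃ y, 0 ≤ y ∧ c < Φ y)
    {x x' : ℝ} (h : x ≤ x') : PhiInv Φ x ≤ PhiInv Φ x' := by
  obtain ⟨y, hy0, hy⟩ := hub x'
  exact csInf_le_csInf ⟨0, fun z hz => hz.1⟩ ⟨y, hy0, hy⟩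
    (fun z hz => ⟨hz.1, lt_of_le_of_lt h hz.2⟩)

lemma isOpen_maximal_gt {d : ℕ} (ν : Measure (Euc d)) (lamE : ℝ≥0∞) (hlam : lamE ≠ ∞) :
    IsOpen {x : Euc d | lamE < maximal ν x} := by
  rw [Metric.isOpen_iff]
  intro x hx
  simp only [Set.mem_setOf_eq, maximal, lt_iSup_iff] at hx
  obtain ⟨s, hs, hgt⟩ := hx
  have hvol0 : ∀ (z : Euc d) (r : ℝ), 0 < r → volume (closedBall z r) ≠ 0 :=
    fun z r hr => (measure_closedBall_pos volume z hr).ne'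
  have hvolt : ∀ (z : Euc d) (r : ℝ), volume (closedBall z r) ≠ ∞ :=
    fun z r => measure_closedBall_lt_top.ne
  have key : lamE * volume (closedBall x s) < ν (closedBall x s) :=
    (ENNReal.lt_div_iff_mul_lt (Or.inl (hvol0 x s hs)) (Or.inl (hvolt x s))).mp hgt
  have hfin : ∃ R > (0:ℝ), volume (cthickening R (closedBall x s)) ≠ ∞ := by
    refine ⟨1, one_pos, ?_⟩
    rw [cthickening_closedBall zero_le_one hs.le]
    exact hvolt x _
  have htend : Tendsto (fun r : ℝ => lamE * volume (cthickening r (closedBall x s))) (𝓝[>] 0)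
      (𝓝 (lamE * volume (closedBall x s))) :=
    (ENNReal.Tendsto.const_mul
      ((tendsto_measure_cthickening_of_isClosed hfin isClosed_closedBall).mono_left
        nhdsWithin_le_nhds) (Or.inr hlam))
  obtain ⟨r, hrlt, hr0⟩ := ((htend.eventually_lt_const key).and self_mem_nhdsWithin).exists
  refine ⟨r, hr0, fun x' hx' => ?_⟩
  have hsub : closedBall x s ⊆ closedBall x' (r + s) := fun y hy => by
    have h1 : dist y x ≤ s := mem_closedBall.mp hy
    have h2 : dist x x' < r := by rw [dist_comm]; exact mem_ball.mp hx'
    have h3 : dist y x' ≤ dist y x + dist x x' := dist_triangle y x x'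
    exact mem_closedBall.mpr (by linarith)
  have hveq : volume (closedBall x' (r + s)) = volume (cthickening r (closedBall x s)) := by
    rw [cthickening_closedBall hr0.le hs.le]
    rw [Measure.addHaar_closedBall_center volume x' (r+s),
      Measure.addHaar_closedBall_center volume x (r+s)]
  have hlt : lamE * volume (closedBall x' (r + s)) < ν (closedBall x' (r + s)) := by
    rw [hveq]
    exact lt_of_lt_of_le hrlt (measure_mono hsub)
  have hrs : (0:ℝ) < r + s := by linarith
  have hfin2 : lamE < ν (closedBall x' (r + s)) / volume (closedBall x' (r + s)) :=
    (ENNReal.lt_div_iff_mul_lt (Or.inl (hvol0 x' _ hrs)) (Or.inl (hvolt x' _))).mpr hlt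
  exact lt_of_lt_of_le hfin2
    (le_iSup₂ (f := fun (t : ℝ) (_ : 0 < t) => ν (closedBall x' t) / volume (closedBall x' t))
      (r + s) hrs)

open Filter in
/-- Theorem 2.16 (case of bounded densities, `r = ∞`): Avikainen-type estimate for
essentially bounded Orlicz–Sobolev functions `f ∈ W^{1,Φ}(ℝ^d)`, where `Φ` is an
N-function whose complementary function satisfies the Δ₂-condition:
`E[|f(X) − f(X̂)|^q] ≤ C(q) inf_{λ>0} (λ⁻¹ + Φ⁻¹(λ)^q E[|X − X̂|^q])` with
`C(q) = max{(2K₀/α)^q, (2‖f‖_∞)^q A₁ (‖p_X‖_∞ + ‖p_X̂‖_∞) ‖Φ(α|Df|)‖_{L¹}}`. -/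
theorem stmt_10 {d : ℕ} {Ω : Type*} [MeasurableSpace Ω] (P : Measure Ω) [IsProbabilityMeasure P]
    (Φ : ℝ → ℝ)
    (hconv : ConvexOn ℝ (Set.Ici 0) Φ) (hcont : ContinuousOn Φ (Set.Ici 0))
    (hzero : ∀ x ≥ (0:ℝ), (Φ x = 0 ↔ x = 0)) (hnn : ∀ x ≥ (0:ℝ), 0 ≤ Φ x)
    (hlim0 : Tendsto (fun x => Φ x / x) (𝓝[>] 0) (𝓝 0))
    (hlimtop : Tendsto (fun x => Φ x / x) atTop atTop)
    (hΔ₂ : ∃ C > (0:ℝ), ∀ x > (0:ℝ), YoungCompl Φ (2 * x) ≤ C * YoungCompl Φ x)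
    (X Xh : Ω → Euc d) (hX : Measurable X) (hXh : Measurable Xh)
    (pX pXh : Euc d → ℝ≥0∞)
    (hdX : P.map X = volume.withDensity pX)
    (hdXh : P.map Xh = volume.withDensity pXh)
    (hbX : essSup pX volume ≠ ∞) (hbXh : essSup pXh volume ≠ ∞)
    (f : Euc d → ℝ) (Df : Euc d → Euc d)
    (hgrad : ∀ g : Euc d → Euc d, ContDiff ℝ 1 g → HasCompactSupport g →
      ∫ x, f x * ediv g x = - ∫ x, (inner ℝ (Df x) (g x) : ℝ))
    (hfΦ : ∃ β > (0:ℝ), Integrable (fun x => Φ (β * |f x|)) volume)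
    (hfb : eLpNorm f ⊤ volume ≠ ∞)
    (q K₀ A₁ α : ℝ) (hq : 0 < q) (hK₀ : 0 < K₀) (hA₁ : 0 < A₁) (hα : 0 < α)
    (hint : Integrable (fun x => Φ (α * ‖Df x‖)) volume)
    (hpt : ∀ᵐ x ∂(volume : Measure (Euc d)), ∀ᵐ y ∂(volume : Measure (Euc d)),
      ENNReal.ofReal |f x - f y|
        ≤ ENNReal.ofReal (K₀ / α * dist x y)
          * (PhiInvE Φ (maximal (orliczGradMeasure d Φ α Df) x)
            + PhiInvE Φ (maximal (orliczGradMeasure d Φ α Df) y)))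
    (hweak : ∀ lam : ℝ≥0∞, lam ≠ 0 →
      volume {x : Euc d | lam < maximal (orliczGradMeasure d Φ α Df) x}
        ≤ ENNReal.ofReal A₁ * orliczGradMeasure d Φ α Df Set.univ / lam) :
    ∀ lam : ℝ, 0 < lam →
      ∫⁻ ω, ENNReal.ofReal |f (X ω) - f (Xh ω)| ^ q ∂P
        ≤ max (ENNReal.ofReal ((2 * K₀ / α) ^ q))
            (ENNReal.ofReal ((2 * (eLpNorm f ⊤ volume).toReal) ^ q)
              * ENNReal.ofReal A₁ * (essSup pX volume + essSup pXh volume)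
              * ∫⁻ x, ENNReal.ofReal (Φ (α * ‖Df x‖)) ∂volume)
          * (ENNReal.ofReal lam⁻¹
              + ENNReal.ofReal (PhiInv Φ lam ^ q) * ∫⁻ ω, edist (X ω) (Xh ω) ^ q ∂P) := by
  intro lam hlam
  classical
  set ν := orliczGradMeasure d Φ α Df with hν
  set lamE := ENNReal.ofReal lam with hlamE
  have hlamE0 : lamE ≠ 0 := (ENNReal.ofReal_pos.mpr hlam).ne'
  have hlamEtop : lamE ≠ ∞ := ENNReal.ofReal_ne_top
  set E := {x : Euc d | lamE < maximal ν x} with hE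
  have hEmeas : MeasurableSet E := (isOpen_maximal_gt ν lamE hlamEtop).measurableSet
  -- Φ is unbounded
  have hub : ∀ c : ℝ, ∃ y, 0 ≤ y ∧ c < Φ y := by
    intro c
    obtain ⟨y, hy1, hy2⟩ := ((hlimtop.eventually_gt_atTop (max c 0 + 1)).and
      (eventually_ge_atTop (1:ℝ))).exists
    have hy0 : (0:ℝ) < y := lt_of_lt_of_le one_pos hy2
    refine ⟨y, hy0.le, ?_⟩
    have h3 : (max c 0 + 1) * y < Φ y := (lt_div_iff₀ hy0).mp hy1
    nlinarith [le_max_left c 0, le_max_right c (0:ℝ)]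
  -- essential bound on f
  set Nf := (eLpNorm f ⊤ volume).toReal with hNfdef
  have hfbd : ∀ᵐ x ∂(volume : Measure (Euc d)), |f x| ≤ Nf := by
    have h1 : ∀ᵐ x ∂(volume : Measure (Euc d)), (‖f x‖₊ : ℝ≥0∞) ≤ eLpNorm f ⊤ volume := by
      rw [eLpNorm_exponent_top, eLpNormEssSup]
      exact ENNReal.ae_le_essSup _
    filter_upwards [h1] with x hx
    have h2 := ENNReal.toReal_mono hfb hx
    simpa [Real.norm_eq_abs, hNfdef] using h2
  -- density points of G
  set G := Eᶜ with hG
  have hGmeas : MeasurableSet G := hEmeas.compl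
  set Gstar := {x : Euc d | ∀ ε : ℝ, 0 < ε → 0 < volume (G ∩ closedBall x ε)} with hGstar
  have hdens : volume (G \ Gstar) = 0 := by
    have h := Besicovitch.ae_tendsto_measure_inter_div (volume : Measure (Euc d)) G
    have h2 : ∀ᵐ x ∂(volume.restrict G), x ∈ Gstar := by
      filter_upwards [h] with x hx
      intro ε hε
      have h3 : ∀ᶠ r in 𝓝[>] (0:ℝ),
          (1:ℝ≥0∞)/2 < volume (G ∩ closedBall x r) / volume (closedBall x r) :=
        hx.eventually_const_lt (by norm_num)
      have h4 : Ioo (0:ℝ) ε ∈ 𝓝[>] (0:ℝ) := Ioo_mem_nhdsGT_of_mem ⟨le_refl 0, hε⟩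
      obtain ⟨r, hr1, hr2⟩ := (h3.and h4).exists
      have h5 : volume (G ∩ closedBall x r) ≠ 0 := by
        intro h0
        rw [h0, ENNReal.zero_div] at hr1
        exact (not_lt.mpr zero_le) hr1
      have h6 : volume (G ∩ closedBall x r) ≤ volume (G ∩ closedBall x ε) :=
        measure_mono (inter_subset_inter_right _ (closedBall_subset_closedBall hr2.2.le))
      exact lt_of_lt_of_le (pos_iff_ne_zero.mpr h5) h6
    have h7 : volume.restrict G Gstarᶜ = 0 := ae_iff.mp h2
    calc volume (G \ Gstar) = volume (Gstarᶜ ∩ G) := by rw [diff_eq, inter_comm]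
      _ = volume.restrict G Gstarᶜ := (Measure.restrict_apply' hGmeas).symm
      _ = 0 := h7
  -- combined null set
  set N₀ := {x : Euc d | ¬ (|f x| ≤ Nf ∧ ∀ᵐ y ∂(volume : Measure (Euc d)),
      ENNReal.ofReal |f x - f y| ≤ ENNReal.ofReal (K₀ / α * dist x y)
        * (PhiInvE Φ (maximal ν x) + PhiInvE Φ (maximal ν y)))} ∪ (G \ Gstar) with hN₀def
  have hN₀null : volume N₀ = 0 := by
    apply measure_union_null _ hdens
    exact ae_iff.mp (hfbd.and hpt)
  set Nm := toMeasurable volume N₀ with hNmdef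
  have hNmmeas : MeasurableSet Nm := measurableSet_toMeasurable _ _
  have hNmnull : volume Nm = 0 := by rw [hNmdef, measure_toMeasurable]; exact hN₀null
  set Bad := E ∪ Nm with hBaddef
  have hBadmeas : MeasurableSet Bad := hEmeas.union hNmmeas
  have hBadvol : volume Bad ≤ ENNReal.ofReal A₁ * ν Set.univ / lamE := by
    calc volume Bad ≤ volume E + volume Nm := measure_union_le _ _
      _ = volume E := by rw [hNmnull, add_zero]
      _ ≤ _ := hweak lamE hlamE0
  -- PhiInvE bound on the good set
  have hPle : ∀ z : Euc d, z ∉ E → PhiInvE Φ (maximal ν z) ≤ ENNReal.ofReal (PhiInv Φ lam) := by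
    intro z hz
    have hzle : maximal ν z ≤ lamE := by
      have := hz
      simp only [hE, Set.mem_setOf_eq, not_lt] at this
      exact this
    have hne : maximal ν z ≠ ∞ := (lt_of_le_of_lt hzle (lt_of_le_of_ne le_top hlamEtop)).ne
    rw [PhiInvE, if_neg hne]
    exact ENNReal.ofReal_le_ofReal (phiInv_mono Φ hub
      (le_trans (ENNReal.toReal_mono hlamEtop hzle) (le_of_eq (by rw [hlamE, ENNReal.toReal_ofReal hlam.le]))))
  -- key pointwise estimate on good pairs
  set PI := PhiInv Φ lam with hPIdef
  have hPInn : 0 ≤ PI := phiInv_nonneg Φ lam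
  have hKα : 0 ≤ K₀ / α := le_of_lt (div_pos hK₀ hα)
  set C0 := 2 * (K₀ / α) * PI with hC0def
  have hC0nn : 0 ≤ C0 := mul_nonneg (by linarith) hPInn
  have key : ∀ x₁, x₁ ∉ Bad → ∀ x₂, x₂ ∉ Bad → |f x₁ - f x₂| ≤ C0 * dist x₁ x₂ := by
    intro x₁ hx₁ x₂ hx₂
    have hx₁E : x₁ ∉ E := fun h => hx₁ (Or.inl h)
    have hx₂E : x₂ ∉ E := fun h => hx₂ (Or.inl h)
    have hx₁N : x₁ ∉ N₀ := fun h => hx₁ (Or.inr (subset_toMeasurable _ _ h))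
    have hx₂N : x₂ ∉ N₀ := fun h => hx₂ (Or.inr (subset_toMeasurable _ _ h))
    have hx₁G : x₁ ∈ Gstar := by
      by_contra h
      exact hx₁N (Or.inr ⟨hx₁E, h⟩)
    have hh₁ : |f x₁| ≤ Nf ∧ ∀ᵐ y ∂(volume : Measure (Euc d)),
        ENNReal.ofReal |f x₁ - f y| ≤ ENNReal.ofReal (K₀ / α * dist x₁ y)
          * (PhiInvE Φ (maximal ν x₁) + PhiInvE Φ (maximal ν y)) := by
      by_contra h
      exact hx₁N (Or.inl h)
    have hh₂ : |f x₂| ≤ Nf ∧ ∀ᵐ y ∂(volume : Measure (Euc d)),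
        ENNReal.ofReal |f x₂ - f y| ≤ ENNReal.ofReal (K₀ / α * dist x₂ y)
          * (PhiInvE Φ (maximal ν x₂) + PhiInvE Φ (maximal ν y)) := by
      by_contra h
      exact hx₂N (Or.inl h)
    apply le_of_forall_pos_le_add
    intro δ hδ
    set ε := δ / (2 * C0 + 1) with hεdef
    have hεpos : 0 < ε := div_pos hδ (by linarith)
    have hvol : 0 < volume (G ∩ closedBall x₁ ε) := hx₁G ε hεpos
    set A := {y : Euc d | ¬ (ENNReal.ofReal |f x₁ - f y| ≤ ENNReal.ofReal (K₀ / α * dist x₁ y)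
          * (PhiInvE Φ (maximal ν x₁) + PhiInvE Φ (maximal ν y)))}
      ∪ {y : Euc d | ¬ (ENNReal.ofReal |f x₂ - f y| ≤ ENNReal.ofReal (K₀ / α * dist x₂ y)
          * (PhiInvE Φ (maximal ν x₂) + PhiInvE Φ (maximal ν y)))} with hAdef
    have hAnull : volume A = 0 :=
      measure_union_null (ae_iff.mp hh₁.2) (ae_iff.mp hh₂.2)
    have hpos : volume ((G ∩ closedBall x₁ ε) \ A) ≠ 0 := by
      rw [measure_diff_null hAnull]
      exact hvol.ne'
    obtain ⟨y, hyGB, hyA⟩ := nonempty_of_measure_ne_zero hpos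
    have hyG : y ∈ G := hyGB.1
    have hyB : dist y x₁ ≤ ε := mem_closedBall.mp hyGB.2
    have hI₁ : ENNReal.ofReal |f x₁ - f y| ≤ ENNReal.ofReal (K₀ / α * dist x₁ y)
        * (PhiInvE Φ (maximal ν x₁) + PhiInvE Φ (maximal ν y)) := by
      by_contra h
      exact hyA (Or.inl h)
    have hI₂ : ENNReal.ofReal |f x₂ - f y| ≤ ENNReal.ofReal (K₀ / α * dist x₂ y)
        * (PhiInvE Φ (maximal ν x₂) + PhiInvE Φ (maximal ν y)) := by
      by_contra h
      exact hyA (Or.inr h)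
    have hyE : y ∉ E := hyG
    have hreal : ∀ x' : Euc d, x' ∉ E →
        (ENNReal.ofReal |f x' - f y| ≤ ENNReal.ofReal (K₀ / α * dist x' y)
          * (PhiInvE Φ (maximal ν x') + PhiInvE Φ (maximal ν y))) →
        |f x' - f y| ≤ (K₀ / α) * dist x' y * (2 * PI) := by
      intro x' hx'E hI
      have h5 : ENNReal.ofReal |f x' - f y| ≤ ENNReal.ofReal ((K₀ / α) * dist x' y * (2 * PI)) := by
        calc ENNReal.ofReal |f x' - f y|
            ≤ ENNReal.ofReal (K₀ / α * dist x' y)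
              * (PhiInvE Φ (maximal ν x') + PhiInvE Φ (maximal ν y)) := hI
          _ ≤ ENNReal.ofReal (K₀ / α * dist x' y)
              * (ENNReal.ofReal PI + ENNReal.ofReal PI) :=
            mul_le_mul_right (add_le_add (hPle x' hx'E) (hPle y hyE)) _
          _ = ENNReal.ofReal ((K₀ / α) * dist x' y * (2 * PI)) := by
            rw [← ENNReal.ofReal_add hPInn hPInn,
              ← ENNReal.ofReal_mul (mul_nonneg hKα dist_nonneg)]
            congr 1
            ring
      exact (ENNReal.ofReal_le_ofReal_iff (by positivity)).mp h5
    have hr₁ : |f x₁ - f y| ≤ (K₀ / α) * dist x₁ y * (2 * PI) := hreal x₁ hx₁E hI₁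
    have hr₂ : |f x₂ - f y| ≤ (K₀ / α) * dist x₂ y * (2 * PI) := hreal x₂ hx₂E hI₂
    have hd₁ : dist x₁ y ≤ ε := by rw [dist_comm]; exact hyB
    have hd₂ : dist x₂ y ≤ dist x₁ x₂ + ε := by
      have := dist_triangle x₂ x₁ y
      have h8 : dist x₂ x₁ = dist x₁ x₂ := dist_comm _ _
      have h9 : dist x₁ y ≤ ε := hd₁
      linarith
    have hb₁ : |f x₁ - f y| ≤ C0 * ε := by
      calc |f x₁ - f y| ≤ (K₀ / α) * dist x₁ y * (2 * PI) := hr₁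
        _ ≤ (K₀ / α) * ε * (2 * PI) := by
          apply mul_le_mul_of_nonneg_right (mul_le_mul_of_nonneg_left hd₁ hKα) (by positivity)
        _ = C0 * ε := by rw [hC0def]; ring
    have hb₂ : |f x₂ - f y| ≤ C0 * (dist x₁ x₂ + ε) := by
      calc |f x₂ - f y| ≤ (K₀ / α) * dist x₂ y * (2 * PI) := hr₂
        _ ≤ (K₀ / α) * (dist x₁ x₂ + ε) * (2 * PI) := by
          apply mul_le_mul_of_nonneg_right (mul_le_mul_of_nonneg_left hd₂ hKα) (by positivity)
        _ = C0 * (dist x₁ x₂ + ε) := by rw [hC0def]; ring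
    have htri : |f x₁ - f x₂| ≤ |f x₁ - f y| + |f x₂ - f y| := by
      have h10 := abs_sub_le (f x₁) (f y) (f x₂)
      have h11 : |f y - f x₂| = |f x₂ - f y| := abs_sub_comm _ _
      linarith
    have hεle : 2 * C0 * ε ≤ δ := by
      have h8 : 2 * C0 / (2 * C0 + 1) ≤ 1 := by
        rw [div_le_one (by linarith)]; linarith
      calc 2 * C0 * ε = (2 * C0 / (2 * C0 + 1)) * δ := by rw [hεdef]; ring
        _ ≤ 1 * δ := mul_le_mul_of_nonneg_right h8 hδ.le
        _ = δ := one_mul δ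
    linarith
  -- transfer of nullity and measure bounds through the marginals
  have hmargnull : ∀ (Z : Ω → Euc d) (pZ : Euc d → ℝ≥0∞), Measurable Z →
      P.map Z = volume.withDensity pZ → P (Z ⁻¹' Nm) = 0 := by
    intro Z pZ hZ hdZ
    have h1 : P (Z ⁻¹' Nm) = (P.map Z) Nm := (Measure.map_apply hZ hNmmeas).symm
    rw [h1, hdZ, withDensity_apply _ hNmmeas]
    exact setLIntegral_measure_zero _ _ hNmnull
  have hmargbound : ∀ (Z : Ω → Euc d) (pZ : Euc d → ℝ≥0∞), Measurable Z →
      P.map Z = volume.withDensity pZ →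
      P (Z ⁻¹' Bad) ≤ essSup pZ volume * volume Bad := by
    intro Z pZ hZ hdZ
    rw [← Measure.map_apply hZ hBadmeas, hdZ, withDensity_apply _ hBadmeas]
    calc ∫⁻ x in Bad, pZ x ∂volume ≤ ∫⁻ _x in Bad, essSup pZ volume ∂volume :=
        lintegral_mono_ae (ae_restrict_of_ae (ENNReal.ae_le_essSup pZ))
      _ = essSup pZ volume * volume Bad := setLIntegral_const _ _
  -- constants
  set CA := ENNReal.ofReal ((2 * K₀ / α) ^ q) with hCAdef
  set CB := ENNReal.ofReal ((2 * Nf) ^ q) with hCBdef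
  set Pq := ENNReal.ofReal (PI ^ q) with hPqdef
  -- a.e. pointwise bound in ω
  have haeX : ∀ᵐ ω ∂P, X ω ∉ Nm := by
    have h1 := hmargnull X pX hX hdX
    exact measure_eq_zero_iff_ae_notMem.mp h1
  have haeXh : ∀ᵐ ω ∂P, Xh ω ∉ Nm := by
    have h1 := hmargnull Xh pXh hXh hdXh
    exact measure_eq_zero_iff_ae_notMem.mp h1
  have hptw : ∀ᵐ ω ∂P, ENNReal.ofReal |f (X ω) - f (Xh ω)| ^ q ≤
      CA * Pq * edist (X ω) (Xh ω) ^ q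
        + CB * ((X ⁻¹' Bad).indicator 1 ω + (Xh ⁻¹' Bad).indicator 1 ω) := by
    filter_upwards [haeX, haeXh] with ω hωX hωXh
    by_cases hb : X ω ∈ Bad ∨ Xh ω ∈ Bad
    · have hf1 : |f (X ω)| ≤ Nf := by
        by_contra h
        exact hωX (subset_toMeasurable _ _ (Or.inl (fun hc => h hc.1)))
      have hf2 : |f (Xh ω)| ≤ Nf := by
        by_contra h
        exact hωXh (subset_toMeasurable _ _ (Or.inl (fun hc => h hc.1)))
      have habs : |f (X ω) - f (Xh ω)| ≤ 2 * Nf := by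
        rw [abs_le] at hf1 hf2 ⊢
        constructor <;> [linarith [hf1.1, hf2.2]; linarith [hf1.2, hf2.1]]
      have hle1 : ENNReal.ofReal |f (X ω) - f (Xh ω)| ^ q ≤ CB := by
        rw [ENNReal.ofReal_rpow_of_nonneg (abs_nonneg _) hq.le]
        exact ENNReal.ofReal_le_ofReal (Real.rpow_le_rpow (abs_nonneg _) habs hq.le)
      have hind : (1:ℝ≥0∞) ≤ (X ⁻¹' Bad).indicator 1 ω + (Xh ⁻¹' Bad).indicator 1 ω := by
        rcases hb with hb | hb
        · have : (X ⁻¹' Bad).indicator (1 : Ω → ℝ≥0∞) ω = 1 := Set.indicator_of_mem hb 1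
          rw [this]; exact le_self_add
        · have : (Xh ⁻¹' Bad).indicator (1 : Ω → ℝ≥0∞) ω = 1 := Set.indicator_of_mem hb 1
          rw [this]; exact le_add_self
      calc ENNReal.ofReal |f (X ω) - f (Xh ω)| ^ q ≤ CB := hle1
        _ = CB * 1 := (mul_one _).symm
        _ ≤ CB * ((X ⁻¹' Bad).indicator 1 ω + (Xh ⁻¹' Bad).indicator 1 ω) :=
          mul_le_mul_right hind _
        _ ≤ _ := le_add_self
    · push_neg at hb
      obtain ⟨hb1, hb2⟩ := hb
      have hkey := key _ hb1 _ hb2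
      have hstep : ENNReal.ofReal |f (X ω) - f (Xh ω)| ^ q ≤ CA * Pq * edist (X ω) (Xh ω) ^ q := by
        calc ENNReal.ofReal |f (X ω) - f (Xh ω)| ^ q
            ≤ ENNReal.ofReal (C0 * dist (X ω) (Xh ω)) ^ q :=
              ENNReal.rpow_le_rpow (ENNReal.ofReal_le_ofReal hkey) hq.le
          _ = (ENNReal.ofReal C0 * edist (X ω) (Xh ω)) ^ q := by
              rw [ENNReal.ofReal_mul hC0nn, edist_dist]
          _ = ENNReal.ofReal C0 ^ q * edist (X ω) (Xh ω) ^ q :=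
              ENNReal.mul_rpow_of_nonneg _ _ hq.le
          _ = CA * Pq * edist (X ω) (Xh ω) ^ q := by
              congr 1
              rw [ENNReal.ofReal_rpow_of_nonneg hC0nn hq.le]
              have hC0eq : C0 = (2 * K₀ / α) * PI := by rw [hC0def]; ring
              rw [hC0eq, Real.mul_rpow (by positivity) hPInn, ENNReal.ofReal_mul (by positivity)]
      exact le_trans hstep le_self_add
  -- integrate
  have hm1 : Measurable fun ω => edist (X ω) (Xh ω) ^ q :=
    (ENNReal.continuous_rpow_const.measurable).comp (hX.edist hXh)
  have hm2 : Measurable fun ω => (X ⁻¹' Bad).indicator (1 : Ω → ℝ≥0∞) ω :=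
    measurable_one.indicator (hX hBadmeas)
  have hm3 : Measurable fun ω => (Xh ⁻¹' Bad).indicator (1 : Ω → ℝ≥0∞) ω :=
    measurable_one.indicator (hXh hBadmeas)
  have hIle : ∫⁻ ω, ENNReal.ofReal |f (X ω) - f (Xh ω)| ^ q ∂P ≤
      CA * Pq * ∫⁻ ω, edist (X ω) (Xh ω) ^ q ∂P
        + CB * (P (X ⁻¹' Bad) + P (Xh ⁻¹' Bad)) := by
    calc ∫⁻ ω, ENNReal.ofReal |f (X ω) - f (Xh ω)| ^ q ∂P
        ≤ ∫⁻ ω, (CA * Pq * edist (X ω) (Xh ω) ^ q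
          + CB * ((X ⁻¹' Bad).indicator 1 ω + (Xh ⁻¹' Bad).indicator 1 ω)) ∂P :=
          lintegral_mono_ae hptw
      _ = CA * Pq * ∫⁻ ω, edist (X ω) (Xh ω) ^ q ∂P
          + CB * (P (X ⁻¹' Bad) + P (Xh ⁻¹' Bad)) := by
          rw [lintegral_add_left (hm1.const_mul _), lintegral_const_mul _ hm1,
            lintegral_const_mul _ (f := fun ω => (X ⁻¹' Bad).indicator 1 ω + (Xh ⁻¹' Bad).indicator 1 ω) (hm2.add hm3), lintegral_add_left hm2,
            lintegral_indicator_one (hX hBadmeas), lintegral_indicator_one (hXh hBadmeas)]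
  -- bound the bad part
  have hbadsum : P (X ⁻¹' Bad) + P (Xh ⁻¹' Bad) ≤
      (essSup pX volume + essSup pXh volume) * (ENNReal.ofReal A₁ * ν Set.univ / lamE) := by
    calc P (X ⁻¹' Bad) + P (Xh ⁻¹' Bad)
        ≤ essSup pX volume * volume Bad + essSup pXh volume * volume Bad :=
          add_le_add (hmargbound X pX hX hdX) (hmargbound Xh pXh hXh hdXh)
      _ = (essSup pX volume + essSup pXh volume) * volume Bad := (add_mul _ _ _).symm
      _ ≤ (essSup pX volume + essSup pXh volume) * (ENNReal.ofReal A₁ * ν Set.univ / lamE) :=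
          mul_le_mul_right hBadvol _
  have hνU : ν Set.univ = ∫⁻ x, ENNReal.ofReal (Φ (α * ‖Df x‖)) ∂volume := by
    rw [hν]
    rw [orliczGradMeasure, withDensity_apply _ MeasurableSet.univ, Measure.restrict_univ]
  have hlaminv : lamE⁻¹ = ENNReal.ofReal lam⁻¹ := by
    rw [hlamE, ← ENNReal.ofReal_inv_of_pos hlam]
  set J := ∫⁻ ω, edist (X ω) (Xh ω) ^ q ∂P with hJdef
  set eS := essSup pX volume + essSup pXh volume with heSdef
  set νU := ∫⁻ x, ENNReal.ofReal (Φ (α * ‖Df x‖)) ∂volume with hνUdef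
  have hfinal : CA * Pq * J + CB * (eS * (ENNReal.ofReal A₁ * νU / lamE)) ≤
      max CA (CB * ENNReal.ofReal A₁ * eS * νU) * (ENNReal.ofReal lam⁻¹ + Pq * J) := by
    rw [mul_add]
    have h1 : CA * Pq * J ≤ max CA (CB * ENNReal.ofReal A₁ * eS * νU) * (Pq * J) := by
      rw [mul_assoc]
      exact mul_le_mul_left (le_max_left _ _) _
    have h2 : CB * (eS * (ENNReal.ofReal A₁ * νU / lamE)) ≤
        max CA (CB * ENNReal.ofReal A₁ * eS * νU) * ENNReal.ofReal lam⁻¹ := by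
      have heq : CB * (eS * (ENNReal.ofReal A₁ * νU / lamE)) =
          (CB * ENNReal.ofReal A₁ * eS * νU) * ENNReal.ofReal lam⁻¹ := by
        rw [div_eq_mul_inv, hlaminv]
        ring
      rw [heq]
      exact mul_le_mul_left (le_max_right _ _) _
    calc CA * Pq * J + CB * (eS * (ENNReal.ofReal A₁ * νU / lamE))
        ≤ max CA (CB * ENNReal.ofReal A₁ * eS * νU) * (Pq * J)
          + max CA (CB * ENNReal.ofReal A₁ * eS * νU) * ENNReal.ofReal lam⁻¹ :=
          add_le_add h1 h2
      _ = _ := add_comm _ _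
  calc ∫⁻ ω, ENNReal.ofReal |f (X ω) - f (Xh ω)| ^ q ∂P
      ≤ CA * Pq * J + CB * (P (X ⁻¹' Bad) + P (Xh ⁻¹' Bad)) := hIle
    _ ≤ CA * Pq * J + CB * (eS * (ENNReal.ofReal A₁ * νU / lamE)) := by
        rw [← hνU]
        exact add_le_add_right (mul_le_mul_right hbadsum _) _
    _ ≤ max CA (CB * ENNReal.ofReal A₁ * eS * νU) * (ENNReal.ofReal lam⁻¹ + Pq * J) := hfinal
end
end

section
/- Let X be a solution of the SDE dX(t) = b(t,X(t))dt + σ(t,X(t))dB(t) on [0,T] with bounded Lipschitz (in space), 1/2-Hölder (in time) coefficients and uniformly elliptic σ, and let X^{(n)} be its Euler–Maruyama scheme with step T/n. Then for every f ∈ BV(ℝ^d) ∩ L^∞(ℝ^d), every q ∈ [1,∞) and every δ ∈ (0,1), there is a constant C(q,δ) independent of n such that E[|f(X(T)) − f(X^{(n)}(T))|^q] ≤ C(q,δ) n^{−δ/2}. -/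
/-!
By the layer-cake formula, `|f x - f y|` is the Lebesgue measure of the levels `t` whose
super-level set `E_t = {f > t}` separates `x` and `y`, and since `f` is bounded,
`|f X - f Y|^q ≤ (2‖f‖_∞)^(q-1) |f X - f Y|`. For one level `E`, the pointwise BV estimate
`|1_E x - 1_E y| ≤ K |x - y| (Mν x + Mν y)` only holds for almost every pair, and the pair
`(X, Y)` has no density; it is therefore used through intermediate points `w`, against which both
`X` and `Y` are generic. If `1_E` jumps between `X` and `Y`, `|X - Y| ≤ ρ` and `Mν ≤ (8Kρ)⁻¹` at
`X` and `Y`, then `Mν ≥ (8Kρ)⁻¹` at almost every `w` in the ball of radius `|X - Y|` around `Y`,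
so `Y` is a density point of that set. The weak (1,1) inequality and the bounded densities make
each of these exceptional events `O(ρ |D 1_E|)`, while `P(|X - Y| > ρ) ≤ C n^(-p/2) ρ^(-p)` by the
strong rate. Integrating over `t` (coarea) and taking `ρ = n^(-δ/2)`, `p = δ / (1 - δ)` gives
`n^(-δ/2)`.
-/

open MeasureTheory Metric Filter Set
open scoped ENNReal Topology

noncomputable section

section LawDomination

variable {α Ω : Type*} [MeasurableSpace α] [MeasurableSpace Ω] {μ : Measure α} {P : Measure Ω}
  {X : Ω → α} {D : ℝ≥0∞}

lemma map_le_smul_of_essSup_le {p : α → ℝ≥0∞} (hX : P.map X = μ.withDensity p)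
    (hp : essSup p μ ≤ D) : P.map X ≤ D • μ := by
  rw [hX, ← withDensity_const]
  exact withDensity_mono ((ENNReal.ae_le_essSup p).mono fun _ hx => hx.trans hp)

lemma measure_preimage_le_of_map_le_smul (hX : AEMeasurable X P) (hXD : P.map X ≤ D • μ)
    (U : Set α) : P (X ⁻¹' U) ≤ D * μ U :=
  (Measure.le_map_apply hX U).trans (hXD U)

lemma ae_comp_of_map_le_smul (hX : AEMeasurable X P) (hXD : P.map X ≤ D • μ)
    {R : α → Prop} (hR : ∀ᵐ x ∂μ, R x) : ∀ᵐ ω ∂P, R (X ω) :=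
  ae_of_ae_map hX ((Measure.absolutelyContinuous_of_le_smul hXD).ae_le hR)

end LawDomination

lemma ENNReal.rpow_le_rpow_sub_one_mul {a B : ℝ≥0∞} {q : ℝ} (ha : a ≤ B) (haT : a ≠ ⊤)
    (hq : 1 ≤ q) : a ^ q ≤ B ^ (q - 1) * a := by
  rcases eq_or_ne a 0 with rfl | ha0
  · simp [ENNReal.zero_rpow_of_pos (by linarith : (0 : ℝ) < q)]
  calc a ^ q = a ^ (q - 1) * a ^ (1 : ℝ) := by
        rw [← ENNReal.rpow_add _ _ ha0 haT, sub_add_cancel]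
    _ ≤ B ^ (q - 1) * a := by
        rw [ENNReal.rpow_one]
        gcongr

lemma lintegral_ofReal_abs_sub_rpow_le {α Ω : Type*} [MeasurableSpace Ω] {P : Measure Ω}
    {f : α → ℝ} {M : ℝ} (hM : ∀ x, |f x| ≤ M) {q : ℝ} (hq : 1 ≤ q) (X Y : Ω → α) :
    ∫⁻ ω, ENNReal.ofReal |f (X ω) - f (Y ω)| ^ q ∂P
      ≤ ENNReal.ofReal (2 * M) ^ (q - 1) * ∫⁻ ω, ENNReal.ofReal |f (X ω) - f (Y ω)| ∂P := by
  rw [← lintegral_const_mul' _ _ (by finiteness)]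
  exact lintegral_mono fun ω => ENNReal.rpow_le_rpow_sub_one_mul (ENNReal.ofReal_le_ofReal
    (by linarith [abs_sub (f (X ω)) (f (Y ω)), hM (X ω), hM (Y ω)])) ENNReal.ofReal_ne_top hq

lemma measure_rpow_lt_dist_le_of_lintegral_edist_rpow_le {Ω E : Type*} [MeasurableSpace Ω]
    [PseudoMetricSpace E] [MeasurableSpace E] [OpensMeasurableSpace E] [SecondCountableTopology E]
    {P : Measure Ω} {X Y : Ω → E} (hX : AEMeasurable X P) (hY : AEMeasurable Y P)
    {p δ : ℝ} (hp : 0 < p) (hpδ : p * (1 - δ) = δ) {n : ℕ} (hn : 1 ≤ n) {Cp : ℝ≥0∞}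
    (hmom : ∫⁻ ω, edist (X ω) (Y ω) ^ p ∂P ≤ Cp * (n : ℝ≥0∞) ^ (-(p / 2))) :
    P {ω | (n : ℝ) ^ (-(δ / 2)) < dist (X ω) (Y ω)} ≤ Cp * (n : ℝ≥0∞) ^ (-(δ / 2)) := by
  have hn0 : (n : ℝ≥0∞) ≠ 0 := by exact_mod_cast (Nat.one_le_iff_ne_zero.1 hn)
  have hρ : ENNReal.ofReal ((n : ℝ) ^ (-(δ / 2))) = (n : ℝ≥0∞) ^ (-(δ / 2)) := by
    rw [← ENNReal.ofReal_natCast n, ENNReal.ofReal_rpow_of_pos (by exact_mod_cast hn)]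
  have hε0 : ((n : ℝ≥0∞) ^ (-(δ / 2))) ^ p ≠ 0 := by
    simp [ENNReal.rpow_eq_zero_iff, hn0]
  have hε : ((n : ℝ≥0∞) ^ (-(δ / 2))) ^ p ≠ ⊤ := by
    simp [ENNReal.rpow_eq_top_iff, hn0]
  have hsub : {ω | (n : ℝ) ^ (-(δ / 2)) < dist (X ω) (Y ω)}
      ⊆ {ω | ((n : ℝ≥0∞) ^ (-(δ / 2))) ^ p ≤ edist (X ω) (Y ω) ^ p} := fun ω hω => by
    simp only [mem_ofPred_eq, ← hρ, edist_dist] at hω ⊢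
    gcongr
  calc P {ω | (n : ℝ) ^ (-(δ / 2)) < dist (X ω) (Y ω)}
      ≤ (∫⁻ ω, edist (X ω) (Y ω) ^ p ∂P) / ((n : ℝ≥0∞) ^ (-(δ / 2))) ^ p :=
        (measure_mono hsub).trans
          (meas_ge_le_lintegral_div ((hX.edist hY).pow_const p) hε0 hε)
    _ ≤ Cp * (n : ℝ≥0∞) ^ (-(p / 2)) / ((n : ℝ≥0∞) ^ (-(δ / 2))) ^ p := by gcongr
    _ = Cp * (n : ℝ≥0∞) ^ (-(δ / 2)) := by
        rw [← ENNReal.rpow_mul, div_eq_mul_inv, ← ENNReal.rpow_neg, mul_assoc,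
          ← ENNReal.rpow_add _ _ hn0 (ENNReal.natCast_ne_top n)]
        congr 2
        linear_combination (-(1 : ℝ) / 2) * hpδ

lemma exists_measurable_abs_le_ae_eq {α : Type*} [MeasurableSpace α] {μ : Measure α}
    {f : α → ℝ} (hf : AEStronglyMeasurable f μ) (hfb : eLpNorm f ⊤ μ ≠ ∞) :
    ∃ (g : α → ℝ) (M : ℝ), Measurable g ∧ (∀ x, |g x| ≤ M) ∧ f =ᵐ[μ] g := by
  set M := (eLpNorm f ⊤ μ).toReal
  have hM : 0 ≤ M := ENNReal.toReal_nonneg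
  refine ⟨fun x => max (-M) (min M (hf.mk f x)), M,
    (measurable_const.max (measurable_const.min hf.stronglyMeasurable_mk.measurable)),
    fun x => abs_le.2 ⟨le_max_left _ _, max_le (by linarith) (min_le_left _ _)⟩, ?_⟩
  filter_upwards [ae_le_eLpNormEssSup (f := f) (μ := μ), hf.ae_eq_mk] with x hx hmk
  have hfx : |f x| ≤ M := by
    have := ENNReal.toReal_mono (by rwa [eLpNorm_exponent_top] at hfb) hx
    simpa [Real.norm_eq_abs, M, eLpNorm_exponent_top] using this
  rw [← hmk, min_eq_right (abs_le.1 hfx).2, max_eq_right (abs_le.1 hfx).1]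

lemma lintegral_abs_indicator_lt_sub {α : Type*} (f : α → ℝ) (x y : α) :
    ∫⁻ t, ENNReal.ofReal |{z | t < f z}.indicator (fun _ => (1 : ℝ)) x
      - {z | t < f z}.indicator (fun _ => (1 : ℝ)) y| = ENNReal.ofReal |f x - f y| := by
  have h : ∀ t, ENNReal.ofReal |{z | t < f z}.indicator (fun _ => (1 : ℝ)) x
      - {z | t < f z}.indicator (fun _ => (1 : ℝ)) y|
        = (Ico (min (f x) (f y)) (max (f x) (f y))).indicator 1 t := by
    intro t
    by_cases hx : t < f x <;> by_cases hy : t < f y <;>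
      simp [hx, hy, not_lt.1]
  simp_rw [h]
  rw [lintegral_indicator_one measurableSet_Ico, Real.volume_Ico, max_sub_min_eq_abs']

lemma indicator_setOf_lt_eq_of_notMem_Icc {α : Type*} {f : α → ℝ} {M t : ℝ}
    (hM : ∀ x, |f x| ≤ M) (ht : t ∉ Icc (-M) M) (x y : α) :
    {z | t < f z}.indicator (fun _ => (1 : ℝ)) x
      = {z | t < f z}.indicator (fun _ => (1 : ℝ)) y := by
  have hx := abs_le.1 (hM x)
  have hy := abs_le.1 (hM y)
  rcases not_and_or.1 ht with h | h <;> rw [not_le] at h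
  · rw [indicator_of_mem (s := {z | t < f z}) (show t < f x by linarith),
      indicator_of_mem (s := {z | t < f z}) (show t < f y by linarith)]
  · rw [indicator_of_notMem (s := {z | t < f z}) (show ¬t < f x by linarith),
      indicator_of_notMem (s := {z | t < f z}) (show ¬t < f y by linarith)]

lemma ofReal_abs_indicator_sub_eq_one {α : Type*} {E : Set α} {x y : α}
    (hxy : E.indicator (fun _ => (1 : ℝ)) x ≠ E.indicator (fun _ => (1 : ℝ)) y) :
    ENNReal.ofReal |E.indicator (fun _ => (1 : ℝ)) x - E.indicator (fun _ => (1 : ℝ)) y| = 1 := by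
  by_cases hx : x ∈ E <;> by_cases hy : y ∈ E <;> simp_all

lemma lintegral_ofReal_abs_indicator_sub_le {α Ω : Type*} [MeasurableSpace Ω] {P : Measure Ω}
    (E : Set α) (X Y : Ω → α) :
    ∫⁻ ω, ENNReal.ofReal |E.indicator (fun _ => (1 : ℝ)) (X ω)
        - E.indicator (fun _ => (1 : ℝ)) (Y ω)| ∂P
      ≤ P {ω | E.indicator (fun _ => (1 : ℝ)) (X ω) ≠ E.indicator (fun _ => (1 : ℝ)) (Y ω)} := by
  set B := {ω | E.indicator (fun _ => (1 : ℝ)) (X ω) ≠ E.indicator (fun _ => (1 : ℝ)) (Y ω)}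
  calc ∫⁻ ω, ENNReal.ofReal |E.indicator (fun _ => (1 : ℝ)) (X ω)
        - E.indicator (fun _ => (1 : ℝ)) (Y ω)| ∂P
      ≤ ∫⁻ ω, B.indicator 1 ω ∂P := lintegral_mono fun ω => by
        by_cases hω : ω ∈ B
        · rw [indicator_of_mem hω, Pi.one_apply, ofReal_abs_indicator_sub_eq_one hω]
        · rw [indicator_of_notMem hω, not_not.1 hω, sub_self, abs_zero, ENNReal.ofReal_zero]
    _ ≤ P B := (lintegral_indicator_le _ _).trans (by simp)

section Maximal

variable {d : ℕ}

lemma maximalR_le_maximal (R : ℝ) (ν : Measure (Euc d)) (x : Euc d) :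
    maximalR R ν x ≤ maximal ν x :=
  iSup₂_le fun s hs => le_iSup₂ (f := fun (s : ℝ) (_ : 0 < s) =>
    ν (closedBall x s) / volume (closedBall x s)) s hs.1

lemma div_volume_closedBall_le_maximal (ν : Measure (Euc d)) (x : Euc d) {s : ℝ} (hs : 0 < s) :
    ν (closedBall x s) / volume (closedBall x s) ≤ maximal ν x :=
  le_iSup₂ (f := fun (s : ℝ) (_ : 0 < s) => ν (closedBall x s) / volume (closedBall x s)) s hs

lemma one_le_maximal_restrict {S : Set (Euc d)} {y : Euc d} {r : ℝ} (hr : 0 < r)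
    (hS : ball y r ≤ᵐ[volume] S) : 1 ≤ maximal (volume.restrict S) y := by
  have hr2 : 0 < r / 2 := half_pos hr
  have hsub : closedBall y (r / 2) ⊆ ball y r := closedBall_subset_ball (by linarith)
  have hle : volume (closedBall y (r / 2)) ≤ volume.restrict S (closedBall y (r / 2)) :=
    calc volume (closedBall y (r / 2))
        = volume.restrict (ball y r) (closedBall y (r / 2)) := by
          rw [Measure.restrict_apply measurableSet_closedBall, inter_eq_left.2 hsub]
      _ ≤ volume.restrict S (closedBall y (r / 2)) := Measure.restrict_mono_ae hS _
  refine le_trans ?_ (div_volume_closedBall_le_maximal _ y hr2)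
  rw [ENNReal.le_div_iff_mul_le (Or.inl (measure_closedBall_pos volume y hr2).ne')
    (Or.inl measure_closedBall_lt_top.ne), one_mul]
  exact hle

def MaximalHasWeakTypeOneOne (d : ℕ) (A : ℝ) : Prop :=
  ∀ ν : Measure (Euc d), IsFiniteMeasure ν → ∀ lam : ℝ≥0∞, lam ≠ 0 →
    volume {x : Euc d | lam < maximal ν x} ≤ ENNReal.ofReal A * ν univ / lam

lemma MaximalHasWeakTypeOneOne.volume_le_maximal_le {A : ℝ} (hA : MaximalHasWeakTypeOneOne d A)
    (ν : Measure (Euc d)) [IsFiniteMeasure ν] {lam : ℝ≥0∞} (h0 : lam ≠ 0) (hT : lam ≠ ⊤) :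
    volume {x : Euc d | lam ≤ maximal ν x} ≤ 2 * (ENNReal.ofReal A * ν univ / lam) :=
  calc volume {x : Euc d | lam ≤ maximal ν x}
      ≤ volume {x : Euc d | lam / 2 < maximal ν x} :=
        measure_mono fun x hx => (ENNReal.half_lt_self h0 hT).trans_le hx
    _ ≤ ENNReal.ofReal A * ν univ / (lam / 2) :=
        hA ν inferInstance _ (ENNReal.div_ne_zero.2 ⟨h0, ENNReal.ofNat_ne_top⟩)
    _ = 2 * (ENNReal.ofReal A * ν univ / lam) := by
        rw [div_eq_mul_inv _ (lam / 2),
          ENNReal.inv_div (Or.inl ENNReal.ofNat_ne_top) (Or.inl two_ne_zero),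
          div_eq_mul_inv, div_eq_mul_inv]
        ring

end Maximal

section LevelSet

variable {d : ℕ} {K : ℝ} {ν : Measure (Euc d)} {E : Set (Euc d)} {x y w : Euc d}

/-- The pointwise estimate satisfied by a set `E` of finite perimeter, with `ν = |D 1_E|`. -/
def IndicatorMaximalEstimate (K : ℝ) (ν : Measure (Euc d)) (E : Set (Euc d)) (x y : Euc d) : Prop :=
  ENNReal.ofReal |E.indicator (fun _ => (1 : ℝ)) x - E.indicator (fun _ => (1 : ℝ)) y|
    ≤ ENNReal.ofReal (K * dist x y) * (maximalR (2 * dist x y) ν x + maximalR (2 * dist x y) ν y)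

lemma IndicatorMaximalEstimate.symm (h : IndicatorMaximalEstimate K ν E x y) :
    IndicatorMaximalEstimate K ν E y x := by
  rwa [IndicatorMaximalEstimate, abs_sub_comm, dist_comm, add_comm]

lemma indicatorMaximalEstimate_congr {E' : Set (Euc d)} (hE : E =ᵐ[volume] E')
    (h : ∀ᵐ x, ∀ᵐ y, IndicatorMaximalEstimate K ν E x y) :
    ∀ᵐ x, ∀ᵐ y, IndicatorMaximalEstimate K ν E' x y := by
  have hind := indicator_ae_eq_of_ae_eq_set (f := fun _ => (1 : ℝ)) hE
  filter_upwards [h, hind] with x hx hxE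
  filter_upwards [hx, hind] with y hy hyE
  rwa [IndicatorMaximalEstimate, ← hxE, ← hyE]

lemma le_maximal_of_indicator_ne (hK : 0 < K)
    (hxy : E.indicator (fun _ => (1 : ℝ)) x ≠ E.indicator (fun _ => (1 : ℝ)) y)
    {lam : ℝ≥0∞} (hx : maximal ν x ≤ lam) (hy : maximal ν y ≤ lam)
    (hlam : ENNReal.ofReal (4 * K * dist x y) * lam ≤ 2⁻¹) (hw : dist w y < dist x y)
    (hxw : IndicatorMaximalEstimate K ν E x w) (hwy : IndicatorMaximalEstimate K ν E w y) :
    lam ≤ maximal ν w := by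
  set r := dist x y
  have hr : 0 < r := dist_pos.2 fun h => hxy (by rw [h])
  have hxw_le : dist x w ≤ 2 * r := by
    linarith [dist_triangle x y w, dist_comm y w]
  have h1 : ENNReal.ofReal |E.indicator (fun _ => (1 : ℝ)) x - E.indicator (fun _ => (1 : ℝ)) w|
      ≤ ENNReal.ofReal (2 * K * r) * (lam + maximal ν w) := by
    refine hxw.trans (mul_le_mul' (ENNReal.ofReal_le_ofReal (by nlinarith)) (add_le_add ?_ ?_))
    · exact (maximalR_le_maximal _ _ _).trans hx
    · exact maximalR_le_maximal _ _ _
  have h2 : ENNReal.ofReal |E.indicator (fun _ => (1 : ℝ)) w - E.indicator (fun _ => (1 : ℝ)) y|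
      ≤ ENNReal.ofReal (2 * K * r) * (lam + maximal ν w) := by
    refine hwy.trans (mul_le_mul' (ENNReal.ofReal_le_ofReal (by nlinarith)) ?_)
    rw [add_comm lam]
    exact add_le_add (maximalR_le_maximal _ _ _) ((maximalR_le_maximal _ _ _).trans hy)
  have hsum : 1 ≤ ENNReal.ofReal (4 * K * r) * lam + ENNReal.ofReal (4 * K * r) * maximal ν w :=
    calc (1 : ℝ≥0∞)
        = ENNReal.ofReal |E.indicator (fun _ => (1 : ℝ)) x
            - E.indicator (fun _ => (1 : ℝ)) y| := (ofReal_abs_indicator_sub_eq_one hxy).symm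
      _ ≤ ENNReal.ofReal |E.indicator (fun _ => (1 : ℝ)) x - E.indicator (fun _ => (1 : ℝ)) w|
          + ENNReal.ofReal |E.indicator (fun _ => (1 : ℝ)) w
            - E.indicator (fun _ => (1 : ℝ)) y| := by
          rw [← ENNReal.ofReal_add (abs_nonneg _) (abs_nonneg _)]
          exact ENNReal.ofReal_le_ofReal (abs_sub_le _ _ _)
      _ ≤ ENNReal.ofReal (2 * K * r) * (lam + maximal ν w)
          + ENNReal.ofReal (2 * K * r) * (lam + maximal ν w) := add_le_add h1 h2
      _ = ENNReal.ofReal (4 * K * r) * lam + ENNReal.ofReal (4 * K * r) * maximal ν w := by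
          rw [← two_mul, ← mul_assoc, ← mul_add, ← ENNReal.ofReal_ofNat 2,
            ← ENNReal.ofReal_mul zero_le_two]
          ring_nf
  have hmax : 2⁻¹ ≤ ENNReal.ofReal (4 * K * r) * maximal ν w := by
    refine (ENNReal.add_le_add_iff_left (a := 2⁻¹) (by simp)).1 ?_
    rw [ENNReal.inv_two_add_inv_two]
    exact hsum.trans (add_le_add_left hlam _)
  exact (ENNReal.mul_le_mul_iff_right (ENNReal.ofReal_pos.2 (by positivity)).ne'
    ENNReal.ofReal_ne_top).1 (hlam.trans hmax)

lemma inv_two_lt_maximal_restrict_of_indicator_ne (hK : 0 < K)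
    (hxy : E.indicator (fun _ => (1 : ℝ)) x ≠ E.indicator (fun _ => (1 : ℝ)) y)
    {lam : ℝ≥0∞} (hx : maximal ν x ≤ lam) (hy : maximal ν y ≤ lam)
    (hlam : ENNReal.ofReal (4 * K * dist x y) * lam ≤ 2⁻¹)
    (hxw : ∀ᵐ w, IndicatorMaximalEstimate K ν E x w)
    (hwy : ∀ᵐ w, IndicatorMaximalEstimate K ν E w y) :
    2⁻¹ < maximal (volume.restrict {w | lam ≤ maximal ν w}) y := by
  have hr : 0 < dist x y := dist_pos.2 fun h => hxy (by rw [h])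
  refine (ENNReal.inv_lt_one.2 ENNReal.one_lt_two).trans_le (one_le_maximal_restrict hr ?_)
  filter_upwards [hxw, hwy] with w h1 h2 hw
  exact le_maximal_of_indicator_ne hK hxy hx hy hlam (mem_ball.1 hw) h1 h2

end LevelSet

section Coupling

variable {d : ℕ} {Ω : Type*} [MeasurableSpace Ω] {P : Measure Ω} {X Y : Ω → Euc d} {D : ℝ≥0∞}
  {A K : ℝ}

lemma indicator_comp_ne_ae_le (hK : 0 < K) (hX : AEMeasurable X P) (hY : AEMeasurable Y P)
    (hXD : P.map X ≤ D • volume) (hYD : P.map Y ≤ D • volume) {ν : Measure (Euc d)}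
    {E : Set (Euc d)} (hE : ∀ᵐ x, ∀ᵐ y, IndicatorMaximalEstimate K ν E x y) {ρ : ℝ}
    {lam : ℝ≥0∞} (hlam : ENNReal.ofReal (4 * K * ρ) * lam ≤ 2⁻¹) :
    {ω | E.indicator (fun _ => (1 : ℝ)) (X ω) ≠ E.indicator (fun _ => (1 : ℝ)) (Y ω)}
      ≤ᵐ[P] (X ⁻¹' {x | lam < maximal ν x} ∪ Y ⁻¹' {x | lam < maximal ν x}
        ∪ {ω | ρ < dist (X ω) (Y ω)}
        ∪ Y ⁻¹' {y | 2⁻¹ < maximal (volume.restrict {w | lam ≤ maximal ν w}) y} : Set Ω) := by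
  filter_upwards [ae_comp_of_map_le_smul hX hXD hE,
    ae_comp_of_map_le_smul hY hYD (hE.mono fun _ h => h.mono fun _ h => h.symm)]
    with ω h1 h2 (hω : _ ≠ _)
  by_contra hω'
  change ω ∉ (_ : Set Ω) at hω'
  simp only [mem_union, mem_preimage, mem_ofPred_eq, not_or, not_lt] at hω'
  obtain ⟨⟨⟨hXl, hYl⟩, hd⟩, hSY⟩ := hω'
  refine hSY.not_gt (inv_two_lt_maximal_restrict_of_indicator_ne hK hω hXl hYl ?_ h1 h2)
  exact le_trans (by gcongr) hlam

lemma lintegral_abs_indicator_comp_sub_le (hA : MaximalHasWeakTypeOneOne d A) (hK : 0 < K)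
    (hX : AEMeasurable X P) (hY : AEMeasurable Y P) (hXD : P.map X ≤ D • volume)
    (hYD : P.map Y ≤ D • volume) (ν : Measure (Euc d)) [IsFiniteMeasure ν] {E : Set (Euc d)}
    (hE : ∀ᵐ x, ∀ᵐ y, IndicatorMaximalEstimate K ν E x y) {ρ : ℝ} (hρ : 0 < ρ) :
    ∫⁻ ω, ENNReal.ofReal |E.indicator (fun _ => (1 : ℝ)) (X ω)
        - E.indicator (fun _ => (1 : ℝ)) (Y ω)| ∂P
      ≤ P {ω | ρ < dist (X ω) (Y ω)}
        + D * ENNReal.ofReal A * (2 + 4 * ENNReal.ofReal A) * ENNReal.ofReal (8 * K * ρ)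
          * ν univ := by
  set c := ENNReal.ofReal (8 * K * ρ)
  have hc0 : c ≠ 0 := (ENNReal.ofReal_pos.2 (by positivity)).ne'
  have hlam0 : c⁻¹ ≠ 0 := ENNReal.inv_ne_zero.2 ENNReal.ofReal_ne_top
  have hlam : ENNReal.ofReal (4 * K * ρ) * c⁻¹ ≤ 2⁻¹ := le_of_eq <| by
    rw [show 4 * K * ρ = 2⁻¹ * (8 * K * ρ) by ring, ENNReal.ofReal_mul (by norm_num),
      ENNReal.ofReal_inv_of_pos two_pos, ENNReal.ofReal_ofNat, mul_assoc,
      ENNReal.mul_inv_cancel hc0 ENNReal.ofReal_ne_top, mul_one]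
  set S := {w | c⁻¹ ≤ maximal ν w}
  have hS : volume S ≤ 2 * (ENNReal.ofReal A * ν univ * c) := by
    simpa [div_eq_mul_inv] using hA.volume_le_maximal_le ν hlam0 (ENNReal.inv_ne_top.2 hc0)
  have : IsFiniteMeasure (volume.restrict S) :=
    ⟨by rw [Measure.restrict_apply_univ]; exact hS.trans_lt (by finiteness)⟩
  have hpre : ∀ Z : Ω → Euc d, AEMeasurable Z P → P.map Z ≤ D • volume →
      P (Z ⁻¹' {x | c⁻¹ < maximal ν x}) ≤ D * (ENNReal.ofReal A * ν univ * c) := fun Z hZ hZD => by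
    simpa [div_eq_mul_inv] using (measure_preimage_le_of_map_le_smul hZ hZD _).trans
      (mul_le_mul_right (hA ν inferInstance _ hlam0) D)
  have hYS : P (Y ⁻¹' {y | 2⁻¹ < maximal (volume.restrict S) y})
      ≤ D * (ENNReal.ofReal A * (2 * (ENNReal.ofReal A * ν univ * c)) * 2) := by
    refine (measure_preimage_le_of_map_le_smul hY hYD _).trans (mul_le_mul_right ?_ D)
    calc volume {y | 2⁻¹ < maximal (volume.restrict S) y}
        ≤ ENNReal.ofReal A * volume.restrict S univ / 2⁻¹ := hA _ inferInstance _ (by simp)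
      _ ≤ ENNReal.ofReal A * (2 * (ENNReal.ofReal A * ν univ * c)) * 2 := by
        rw [Measure.restrict_apply_univ, div_eq_mul_inv, inv_inv]
        gcongr
  calc _ ≤ P {ω | E.indicator (fun _ => (1 : ℝ)) (X ω) ≠ E.indicator (fun _ => (1 : ℝ)) (Y ω)} :=
        lintegral_ofReal_abs_indicator_sub_le E X Y
    _ ≤ P (X ⁻¹' {x | c⁻¹ < maximal ν x}) + P (Y ⁻¹' {x | c⁻¹ < maximal ν x})
        + P {ω | ρ < dist (X ω) (Y ω)} + P (Y ⁻¹' {y | 2⁻¹ < maximal (volume.restrict S) y}) :=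
      (measure_mono_ae (indicator_comp_ne_ae_le hK hX hY hXD hYD hE hlam)).trans <|
        (measure_union_le _ _).trans <| add_le_add
          ((measure_union_le _ _).trans (add_le_add (measure_union_le _ _) le_rfl)) le_rfl
    _ ≤ D * (ENNReal.ofReal A * ν univ * c) + D * (ENNReal.ofReal A * ν univ * c)
        + P {ω | ρ < dist (X ω) (Y ω)}
        + D * (ENNReal.ofReal A * (2 * (ENNReal.ofReal A * ν univ * c)) * 2) := by
      gcongr
      exacts [hpre X hX hXD, hpre Y hY hYD]
    _ = _ := by ring

end Coupling

lemma lintegral_abs_sub_comp_le {d : ℕ} {Ω : Type*} [MeasurableSpace Ω] {P : Measure Ω}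
    [SFinite P] {X Y : Ω → Euc d} {D : ℝ≥0∞} {A K : ℝ} (hA : MaximalHasWeakTypeOneOne d A)
    (hK : 0 < K) (hD : D ≠ ⊤) (hX : Measurable X) (hY : Measurable Y)
    (hXD : P.map X ≤ D • volume) (hYD : P.map Y ≤ D • volume) {f : Euc d → ℝ}
    (hf : Measurable f) {M : ℝ} (hM : ∀ x, |f x| ≤ M) {ν : ℝ → Measure (Euc d)}
    (hν : ∀ᵐ t, IsFiniteMeasure (ν t) ∧
      ∀ᵐ x, ∀ᵐ y, IndicatorMaximalEstimate K (ν t) {z | t < f z} x y)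
    {ρ : ℝ} (hρ : 0 < ρ) :
    ∫⁻ ω, ENNReal.ofReal |f (X ω) - f (Y ω)| ∂P
      ≤ ENNReal.ofReal (2 * M) * P {ω | ρ < dist (X ω) (Y ω)}
        + D * ENNReal.ofReal A * (2 + 4 * ENNReal.ofReal A) * ENNReal.ofReal (8 * K * ρ)
          * ∫⁻ t, ν t univ := by
  set κ := D * ENNReal.ofReal A * (2 + 4 * ENNReal.ofReal A) * ENNReal.ofReal (8 * K * ρ)
  set g : Ω → ℝ → ℝ≥0∞ := fun ω t => ENNReal.ofReal |{z | t < f z}.indicator (fun _ => (1 : ℝ))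
    (X ω) - {z | t < f z}.indicator (fun _ => (1 : ℝ)) (Y ω)|
  have hg : Measurable (Function.uncurry g) := by
    have hind : ∀ Z : Ω → Euc d, Measurable Z → Measurable fun q : Ω × ℝ =>
        {z | q.2 < f z}.indicator (fun _ => (1 : ℝ)) (Z q.1) := fun Z hZ =>
      measurable_const.indicator
        (measurableSet_lt measurable_snd (hf.comp (hZ.comp measurable_fst)))
    exact ((hind X hX).sub (hind Y hY)).abs.ennreal_ofReal
  have hlevel : ∀ᵐ t, ∫⁻ ω, g ω t ∂P
      ≤ (Icc (-M) M).indicator (fun _ => P {ω | ρ < dist (X ω) (Y ω)}) t + κ * ν t univ := by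
    filter_upwards [hν] with t ⟨hfin, ht⟩
    by_cases htM : t ∈ Icc (-M) M
    · rw [indicator_of_mem htM]
      exact lintegral_abs_indicator_comp_sub_le hA hK hX.aemeasurable hY.aemeasurable hXD hYD
        (ν t) ht hρ
    · calc ∫⁻ ω, g ω t ∂P = ∫⁻ _, 0 ∂P := lintegral_congr fun ω => by
            simp only [g, indicator_setOf_lt_eq_of_notMem_Icc hM htM (X ω) (Y ω), sub_self,
              abs_zero, ENNReal.ofReal_zero]
        _ ≤ _ := by simp
  calc ∫⁻ ω, ENNReal.ofReal |f (X ω) - f (Y ω)| ∂P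
      = ∫⁻ ω, (∫⁻ t, g ω t) ∂P := by simp only [g, lintegral_abs_indicator_lt_sub]
    _ = ∫⁻ t, ∫⁻ ω, g ω t ∂P := lintegral_lintegral_swap hg.aemeasurable
    _ ≤ ∫⁻ t, ((Icc (-M) M).indicator (fun _ => P {ω | ρ < dist (X ω) (Y ω)}) t
          + κ * ν t univ) := lintegral_mono_ae hlevel
    _ = ENNReal.ofReal (2 * M) * P {ω | ρ < dist (X ω) (Y ω)} + κ * ∫⁻ t, ν t univ := by
      rw [lintegral_add_left (measurable_const.indicator measurableSet_Icc),
        lintegral_indicator_const measurableSet_Icc, lintegral_const_mul' _ _ (by finiteness),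
        Real.volume_Icc, mul_comm, sub_neg_eq_add, ← two_mul]

theorem stmt_16_general {d : ℕ} {Ω : Type*} [MeasurableSpace Ω] (P : Measure Ω) [IsProbabilityMeasure P]
    (XT : Ω → Euc d) (Xn : ℕ → Ω → Euc d)
    (hXT : Measurable XT) (hXn : ∀ n, Measurable (Xn n))
    (hstrong : ∀ p : ℝ, 0 < p → ∃ Cp : ℝ≥0∞, Cp ≠ ∞ ∧ ∀ n : ℕ, 1 ≤ n →
      ∫⁻ ω, edist (XT ω) (Xn n ω) ^ p ∂P ≤ Cp * (n : ℝ≥0∞) ^ (-(p / 2)))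
    (pX : Euc d → ℝ≥0∞) (pXn : ℕ → Euc d → ℝ≥0∞)
    (hdX : P.map XT = volume.withDensity pX)
    (hdXn : ∀ n : ℕ, 1 ≤ n → P.map (Xn n) = volume.withDensity (pXn n))
    (D : ℝ≥0∞) (hD : D ≠ ∞)
    (hbX : essSup pX volume ≤ D) (hbXn : ∀ n : ℕ, 1 ≤ n → essSup (pXn n) volume ≤ D)
    (f : Euc d → ℝ) (hf1 : Integrable f volume) (hfb : eLpNorm f ⊤ volume ≠ ∞)
    (Df : Measure (Euc d)) [IsFiniteMeasure Df]
    (DI : ℝ → Measure (Euc d))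
    (hcoarea : ∫⁻ t, DI t Set.univ ∂(volume : Measure ℝ) = Df Set.univ)
    (K₀ A₁ : ℝ) (hK₀ : 0 < K₀)
    (hpt : ∀ᵐ t ∂(volume : Measure ℝ), IsFiniteMeasure (DI t) ∧
      ∀ᵐ x ∂(volume : Measure (Euc d)), ∀ᵐ y ∂(volume : Measure (Euc d)),
        ENNReal.ofReal |({z | t < f z}).indicator (fun _ => (1:ℝ)) x
            - ({z | t < f z}).indicator (fun _ => (1:ℝ)) y|
          ≤ ENNReal.ofReal (K₀ * dist x y)
            * (maximalR (2 * dist x y) (DI t) x + maximalR (2 * dist x y) (DI t) y))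
    (hweak : ∀ ν : Measure (Euc d), IsFiniteMeasure ν → ∀ lam : ℝ≥0∞, lam ≠ 0 →
      volume {x : Euc d | lam < maximal ν x} ≤ ENNReal.ofReal A₁ * ν Set.univ / lam)
    (q δ : ℝ) (hq : 1 ≤ q) (hδ0 : 0 < δ) (hδ1 : δ < 1) :
    ∃ C : ℝ≥0∞, C ≠ ∞ ∧ ∀ n : ℕ, 1 ≤ n →
      ∫⁻ ω, ENNReal.ofReal |f (XT ω) - f (Xn n ω)| ^ q ∂P
        ≤ C * (n : ℝ≥0∞) ^ (-(δ / 2)) := by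
  obtain ⟨g, M, hg, hgM, hfg⟩ := exists_measurable_abs_le_ae_eq hf1.aestronglyMeasurable hfb
  have hXD := map_le_smul_of_essSup_le hdX hbX
  have hXnD : ∀ n : ℕ, 1 ≤ n → P.map (Xn n) ≤ D • volume := fun n hn =>
    map_le_smul_of_essSup_le (hdXn n hn) (hbXn n hn)
  have hgpt : ∀ᵐ t, IsFiniteMeasure (DI t) ∧
      ∀ᵐ x, ∀ᵐ y, IndicatorMaximalEstimate K₀ (DI t) {z | t < g z} x y :=
    hpt.mono fun t ht => ⟨ht.1, indicatorMaximalEstimate_congr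
      (hfg.mono fun x hx => congrArg (t < ·) hx) ht.2⟩
  set p := δ / (1 - δ)
  have hp : 0 < p := div_pos hδ0 (by linarith)
  have hpδ : p * (1 - δ) = δ := div_mul_cancel₀ _ (by linarith)
  obtain ⟨Cp, hCp, hCpb⟩ := hstrong p hp
  set κ := D * ENNReal.ofReal A₁ * (2 + 4 * ENNReal.ofReal A₁) * ENNReal.ofReal (8 * K₀)
  set B := ENNReal.ofReal (2 * M)
  refine ⟨B ^ (q - 1) * (B * Cp + κ * Df univ), by finiteness, fun n hn => ?_⟩
  set ρ := (n : ℝ) ^ (-(δ / 2))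
  have hρ : ENNReal.ofReal (8 * K₀ * ρ) = ENNReal.ofReal (8 * K₀) * (n : ℝ≥0∞) ^ (-(δ / 2)) := by
    rw [ENNReal.ofReal_mul (by positivity), ← ENNReal.ofReal_natCast n,
      ENNReal.ofReal_rpow_of_pos (by exact_mod_cast hn)]
  calc ∫⁻ ω, ENNReal.ofReal |f (XT ω) - f (Xn n ω)| ^ q ∂P
      = ∫⁻ ω, ENNReal.ofReal |g (XT ω) - g (Xn n ω)| ^ q ∂P := lintegral_congr_ae <| by
        filter_upwards [ae_comp_of_map_le_smul hXT.aemeasurable hXD hfg,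
          ae_comp_of_map_le_smul (hXn n).aemeasurable (hXnD n hn) hfg] with ω h1 h2
        rw [h1, h2]
    _ ≤ B ^ (q - 1) * ∫⁻ ω, ENNReal.ofReal |g (XT ω) - g (Xn n ω)| ∂P :=
        lintegral_ofReal_abs_sub_rpow_le hgM hq XT (Xn n)
    _ ≤ B ^ (q - 1) * (B * P {ω | ρ < dist (XT ω) (Xn n ω)} + D * ENNReal.ofReal A₁
          * (2 + 4 * ENNReal.ofReal A₁) * ENNReal.ofReal (8 * K₀ * ρ) * Df univ) := by
        rw [← hcoarea]
        gcongr
        exact lintegral_abs_sub_comp_le hweak hK₀ hD hXT (hXn n) hXD (hXnD n hn) hg hgM hgpt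
          (by positivity)
    _ ≤ B ^ (q - 1) * (B * Cp + κ * Df univ) * (n : ℝ≥0∞) ^ (-(δ / 2)) := by
        grw [measure_rpow_lt_dist_le_of_lintegral_edist_rpow_le hXT.aemeasurable
          (hXn n).aemeasurable hp hpδ hn (hCpb n hn), hρ]
        exact le_of_eq (by ring)

/-- Theorem 3.6 (case `f ∈ BV ∩ L^∞`): strong rate for irregular functionals of the
Euler–Maruyama scheme.  The SDE hypotheses (bounded Lipschitz-in-space, ½-Hölder-in-time
coefficients, uniformly elliptic diffusion) enter through their consequences: `XT` is the
solution at time `T`, `Xn n` the Euler–Maruyama scheme with step `T/n`, `hstrong` the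
strong rate ½ for all moments, and the densities of `XT` and `Xn n` are bounded uniformly
in `n` (Gaussian bounds).  `f ∈ BV(ℝ^d) ∩ L^∞(ℝ^d)`, with `Df` its variation measure,
`DI t` the variation measures of the super-level sets (coarea), and `K₀`, `A₁` the constants
of the BV pointwise maximal estimate and of the weak (1,1) maximal inequality.
Conclusion: for every `q ∈ [1,∞)` and `δ ∈ (0,1)` there is `C < ∞`, independent of `n`, with
`E[|f(X(T)) − f(X^{(n)}(T))|^q] ≤ C n^{−δ/2}`. -/
theorem stmt_16 {d : ℕ} {Ω : Type*} [MeasurableSpace Ω] (P : Measure Ω) [IsProbabilityMeasure P]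
    (XT : Ω → Euc d) (Xn : ℕ → Ω → Euc d)
    (hXT : Measurable XT) (hXn : ∀ n, Measurable (Xn n))
    (hstrong : ∀ p : ℝ, 0 < p → ∃ Cp : ℝ≥0∞, Cp ≠ ∞ ∧ ∀ n : ℕ, 1 ≤ n →
      ∫⁻ ω, edist (XT ω) (Xn n ω) ^ p ∂P ≤ Cp * (n : ℝ≥0∞) ^ (-(p / 2)))
    (pX : Euc d → ℝ≥0∞) (pXn : ℕ → Euc d → ℝ≥0∞)
    (hdX : P.map XT = volume.withDensity pX)
    (hdXn : ∀ n : ℕ, 1 ≤ n → P.map (Xn n) = volume.withDensity (pXn n))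
    (D : ℝ≥0∞) (hD : D ≠ ∞)
    (hbX : essSup pX volume ≤ D) (hbXn : ∀ n : ℕ, 1 ≤ n → essSup (pXn n) volume ≤ D)
    (f : Euc d → ℝ) (hf1 : Integrable f volume) (hfb : eLpNorm f ⊤ volume ≠ ∞)
    (Df : Measure (Euc d)) [IsFiniteMeasure Df]
    (DI : ℝ → Measure (Euc d))
    (hcoarea : ∫⁻ t, DI t Set.univ ∂(volume : Measure ℝ) = Df Set.univ)
    (K₀ A₁ : ℝ) (hK₀ : 0 < K₀) (hA₁ : 0 < A₁)
    (hpt : ∀ᵐ t ∂(volume : Measure ℝ), IsFiniteMeasure (DI t) ∧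
      ∀ᵐ x ∂(volume : Measure (Euc d)), ∀ᵐ y ∂(volume : Measure (Euc d)),
        ENNReal.ofReal |({z | t < f z}).indicator (fun _ => (1:ℝ)) x
            - ({z | t < f z}).indicator (fun _ => (1:ℝ)) y|
          ≤ ENNReal.ofReal (K₀ * dist x y)
            * (maximalR (2 * dist x y) (DI t) x + maximalR (2 * dist x y) (DI t) y))
    (hweak : ∀ ν : Measure (Euc d), IsFiniteMeasure ν → ∀ lam : ℝ≥0∞, lam ≠ 0 →
      volume {x : Euc d | lam < maximal ν x} ≤ ENNReal.ofReal A₁ * ν Set.univ / lam)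
    (q δ : ℝ) (hq : 1 ≤ q) (hδ0 : 0 < δ) (hδ1 : δ < 1) :
    ∃ C : ℝ≥0∞, C ≠ ∞ ∧ ∀ n : ℕ, 1 ≤ n →
      ∫⁻ ω, ENNReal.ofReal |f (XT ω) - f (Xn n ω)| ^ q ∂P
        ≤ C * (n : ℝ≥0∞) ^ (-(δ / 2)) :=
  stmt_16_general P XT Xn hXT hXn hstrong pX pXn hdX hdXn D hD hbX hbXn f hf1 hfb Df DI hcoarea K₀
    A₁ hK₀ hpt hweak q δ hq hδ0 hδ1
end
end

section
/- Let g : [0,∞) → [0,∞) and Ψ(x) = sup_{y≥0}(xy − Φ(y)) with Φ(y) = y^p (log(e+y))^α where p > 1−α and −1 ≤ α < 0. Then Ψ(2x) ≤ 2^{(α+p)/(α+p−1)} Ψ(x) for all x ≥ 0. -/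
noncomputable section

/-- The N-function `Φ(x) = x^p (log(e + x))^α`. -/
def PhiLog (p α x : ℝ) : ℝ := x ^ p * Real.log (Real.exp 1 + x) ^ α

/-!
Let `μ = 2^{1/(α+p-1)} ≥ 1`. From `log (e + μ z) ≤ log μ + log (e + z) ≤ μ - 1 + log (e + z)` and
`log (e + z) ≥ 1` we get `log (e + μ z) ≤ μ log (e + z)`, and as `α ≤ 0` this gives
`Φ(μ z) ≥ μ^{α+p} Φ(z) = 2 μ Φ(z)`.
Substituting `y = μ y'` in the supremum defining `Ψ(2x)` then yields `Ψ(2x) ≤ 2 μ Ψ(x)`, and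
`2 μ = 2^{(α+p)/(α+p-1)}`.
-/

open Real

section YoungCompl

variable {Φ : ℝ → ℝ}

theorem bddAbove_youngSet_of_le {x x' : ℝ} (hxx' : x ≤ x')
    (h : BddAbove {z : ℝ | ∃ y ≥ (0:ℝ), z = x' * y - Φ y}) :
    BddAbove {z : ℝ | ∃ y ≥ (0:ℝ), z = x * y - Φ y} := by
  obtain ⟨M, hM⟩ := h
  refine ⟨M, ?_⟩
  rintro _ ⟨y, hy, rfl⟩
  have hy' : x' * y - Φ y ≤ M := hM ⟨y, hy, rfl⟩
  nlinarith

/-- The hypothesis `x ≤ x'` handles the junk value `0` of an unbounded supremum. -/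
theorem youngCompl_le_mul_of_forall_exists {x x' C : ℝ} (hxx' : x ≤ x') (hC : 0 ≤ C)
    (h : ∀ y ≥ (0:ℝ), ∃ y' ≥ (0:ℝ), x' * y - Φ y ≤ C * (x * y' - Φ y')) :
    YoungCompl Φ x' ≤ C * YoungCompl Φ x := by
  by_cases hbdd : BddAbove {z : ℝ | ∃ y ≥ (0:ℝ), z = x * y - Φ y}
  · refine csSup_le ⟨_, 0, le_rfl, rfl⟩ ?_
    rintro _ ⟨y, hy, rfl⟩
    obtain ⟨y', hy', hle⟩ := h y hy
    exact hle.trans (mul_le_mul_of_nonneg_left (le_csSup hbdd ⟨y', hy', rfl⟩) hC)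
  · have hbdd' := mt (bddAbove_youngSet_of_le hxx') hbdd
    simp only [YoungCompl, Real.sSup_of_not_bddAbove hbdd, Real.sSup_of_not_bddAbove hbdd',
      mul_zero, le_refl]

theorem youngCompl_mul_le {c μ x : ℝ} (hc : 1 ≤ c) (hμ : 0 < μ) (hx : 0 ≤ x)
    (hΦ : ∀ z ≥ (0:ℝ), c * μ * Φ z ≤ Φ (μ * z)) :
    YoungCompl Φ (c * x) ≤ c * μ * YoungCompl Φ x := by
  refine youngCompl_le_mul_of_forall_exists (by nlinarith) (by positivity) fun y hy => ?_
  refine ⟨y / μ, div_nonneg hy hμ.le, ?_⟩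
  have hΦy : c * μ * Φ (y / μ) ≤ Φ y := by
    simpa only [mul_div_cancel₀ y hμ.ne'] using hΦ (y / μ) (div_nonneg hy hμ.le)
  have hlin : c * μ * (x * (y / μ)) = c * x * y := by field_simp
  nlinarith

end YoungCompl

theorem one_le_log_exp_one_add {z : ℝ} (hz : 0 ≤ z) : 1 ≤ log (exp 1 + z) := by
  rw [le_log_iff_exp_le (by positivity)]
  linarith

theorem log_exp_one_add_mul_le {μ z : ℝ} (hμ : 1 ≤ μ) (hz : 0 ≤ z) :
    log (exp 1 + μ * z) ≤ μ * log (exp 1 + z) := by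
  have hμ0 : 0 < μ := one_pos.trans_le hμ
  calc log (exp 1 + μ * z) ≤ log (μ * (exp 1 + z)) :=
        log_le_log (by positivity) (by nlinarith [exp_pos 1])
    _ = log μ + log (exp 1 + z) := log_mul hμ0.ne' (by positivity)
    _ ≤ (μ - 1) + log (exp 1 + z) := by gcongr; exact log_le_sub_one_of_pos hμ0
    _ ≤ μ * log (exp 1 + z) := by nlinarith [one_le_log_exp_one_add hz]

theorem rpow_add_mul_phiLog_le {p α μ z : ℝ} (hα : α ≤ 0) (hμ : 1 ≤ μ) (hz : 0 ≤ z) :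
    μ ^ (α + p) * PhiLog p α z ≤ PhiLog p α (μ * z) := by
  have hμ0 : 0 < μ := one_pos.trans_le hμ
  have hlog : 0 < log (exp 1 + z) := one_pos.trans_le (one_le_log_exp_one_add hz)
  have hlog_rpow : (μ * log (exp 1 + z)) ^ α ≤ log (exp 1 + μ * z) ^ α :=
    rpow_le_rpow_of_nonpos (one_pos.trans_le (one_le_log_exp_one_add (by positivity)))
      (log_exp_one_add_mul_le hμ hz) hα
  calc μ ^ (α + p) * PhiLog p α z
      = (μ * z) ^ p * (μ * log (exp 1 + z)) ^ α := by
        rw [PhiLog, rpow_add hμ0, mul_rpow hμ0.le hz, mul_rpow hμ0.le hlog.le]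
        ring
    _ ≤ (μ * z) ^ p * log (exp 1 + μ * z) ^ α := by gcongr
    _ = PhiLog p α (μ * z) := rfl

theorem stmt_18_general (p α : ℝ) (hα₀ : α < 0) (hp : 1 - α < p) :
    ∀ x ≥ (0:ℝ),
      YoungCompl (PhiLog p α) (2 * x) ≤ 2 ^ ((α + p) / (α + p - 1)) * YoungCompl (PhiLog p α) x := by
  intro x hx
  have hs : 0 < α + p - 1 := by linarith
  set μ : ℝ := 2 ^ (1 / (α + p - 1))
  have hμ : 1 ≤ μ := one_le_rpow (by norm_num) (by positivity)
  have h2μ : (2 : ℝ) ^ ((α + p) / (α + p - 1)) = 2 * μ := by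
    rw [← rpow_one_add' (by norm_num) (by positivity)]
    congr 1
    field_simp
    ring
  have hμ_pow : μ ^ (α + p) = 2 * μ := by
    rw [← h2μ, ← rpow_mul (by norm_num)]
    congr 1
    field_simp
  rw [h2μ]
  refine youngCompl_mul_le one_le_two (one_pos.trans_le hμ) hx fun z hz => ?_
  rw [← hμ_pow]
  exact rpow_add_mul_phiLog_le hα₀.le hμ hz

/-- Example 2.5 (ii), case `p > 1 − α`, `−1 ≤ α < 0`: the complementary function of
`Φ(x) = x^p (log(e+x))^α` satisfies `Ψ(2x) ≤ 2^{(α+p)/(α+p−1)} Ψ(x)` for all `x ≥ 0`. -/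
theorem stmt_18 (p α : ℝ) (hα₁ : -1 ≤ α) (hα₀ : α < 0) (hp : 1 - α < p) :
    ∀ x ≥ (0:ℝ),
      YoungCompl (PhiLog p α) (2 * x) ≤ 2 ^ ((α + p) / (α + p - 1)) * YoungCompl (PhiLog p α) x :=
  stmt_18_general p α hα₀ hp
end
end
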